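/- arXiv:1306.5478 — 8 statements merged into one kernel-verified Lean document; each statement's English description precedes it below -/
import Mathlib

section
/- The tensor module T(α, β) over the solenoidal Lie algebra W_μ is a simple module whenever α ∉ {0, 1}, or whenever α ∈ {0, 1} and β ∉ Γ_μ. -/
open scoped Classical

/-- The action of the basis element `e_k` of `W_μ` on `T(α,β)`: the basis vector
`v_{β+m}` (`m ∈ Γ`) is encoded as `Finsupp.single m 1` and
`e_k v_s = (s + α k) v_{s+k}`. -/
noncomputable def tact (Γ : AddSubgroup ℂ) (α β : ℂ) (k : Γ) :
    (Γ →₀ ℂ) →ₗ[ℂ] (Γ →₀ ℂ) :=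
  Finsupp.lsum ℂ fun m : Γ => (β + (m : ℂ) + α * (k : ℂ)) • Finsupp.lsingle (m + k)

lemma tact_single (Γ : AddSubgroup ℂ) (α β : ℂ) (k m : Γ) (c : ℂ) :
    tact Γ α β k (Finsupp.single m c) = (β + (m:ℂ) + α * k) • Finsupp.single (m + k) c := by
  simp [tact]

lemma lsum_diag_apply (Γ : AddSubgroup ℂ) (g : Γ → ℂ) (v : Γ →₀ ℂ) (s : Γ) :
    (Finsupp.lsum ℂ (fun m : Γ => g m • (Finsupp.lsingle m : ℂ →ₗ[ℂ] (Γ →₀ ℂ))) v) s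
      = g s * v s := by
  classical
  rw [Finsupp.lsum_apply]
  have h1 : (v.sum fun m c => (g m • (Finsupp.lsingle m : ℂ →ₗ[ℂ] (Γ →₀ ℂ))) c)
      = v.sum fun m c => g m • Finsupp.single m c := by
    apply Finsupp.sum_congr; intro m _; simp
  rw [h1, Finsupp.sum_apply, Finsupp.sum]
  by_cases hs : s ∈ v.support
  · rw [Finset.sum_eq_single s]
    · simp
    · intro b _ hb; simp [Finsupp.single_apply, hb]
    · intro h; exact absurd hs h
  · have hv : v s = 0 := Finsupp.notMem_support_iff.mp hs
    rw [Finset.sum_eq_zero]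
    · simp [hv]
    · intro b hb
      have hbs : b ≠ s := fun h => hs (h ▸ hb)
      simp [Finsupp.single_apply, hbs]

lemma tact_comp (Γ : AddSubgroup ℂ) (α β : ℂ) (k : Γ) :
    (tact Γ α β (-k)).comp (tact Γ α β k)
      = Finsupp.lsum ℂ (fun s : Γ =>
          ((β + (s:ℂ) + α * k) * (β + (s:ℂ) + k - α * k)) •
            (Finsupp.lsingle s : ℂ →ₗ[ℂ] (Γ →₀ ℂ))) := by
  apply Finsupp.lhom_ext
  intro m c
  simp only [LinearMap.comp_apply, tact_single, map_smul, Finsupp.lsum_single,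
    LinearMap.smul_apply, Finsupp.lsingle_apply, smul_smul]
  have h1 : m + k + -k = m := by abel
  rw [h1]
  congr 1
  push_cast
  ring

/-- The tensor module `T(α,β)` over the solenoidal Lie algebra `W_μ` is simple
whenever `α ∉ {0,1}`, or `α ∈ {0,1}` and `β ∉ Γ_μ`: it is nonzero and every
subspace invariant under the action of `W_μ` is `⊥` or `⊤`. -/
theorem stmt3 (n : ℕ) (μ : Fin n → ℂ)
    (hgen : ∀ r : Fin n → ℤ, r ≠ 0 → (∑ i, μ i * (r i : ℂ)) ≠ 0)
    (Γ : AddSubgroup ℂ)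
    (hΓ : ∀ z : ℂ, z ∈ Γ ↔ ∃ r : Fin n → ℤ, z = ∑ i, μ i * (r i : ℂ))
    (α β : ℂ)
    (hαβ : (α ≠ 0 ∧ α ≠ 1) ∨ ((α = 0 ∨ α = 1) ∧ β ∉ Γ)) :
    Nontrivial (Γ →₀ ℂ) ∧
    ∀ S : Submodule ℂ (Γ →₀ ℂ),
      (∀ (k : Γ) (v : Γ →₀ ℂ), v ∈ S → tact Γ α β k v ∈ S) →
      S = ⊥ ∨ S = ⊤ := by
  constructor
  · exact ⟨Finsupp.single 0 1, 0, by simp⟩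
  intro S hS
  by_cases hbot : S = ⊥
  · exact Or.inl hbot
  right
  -- a nonzero element of S
  obtain ⟨v₀, hv₀S, hv₀⟩ : ∃ v ∈ S, v ≠ 0 := by
    by_contra h
    push_neg at h
    exact hbot ((Submodule.eq_bot_iff S).mpr h)
  -- stepping lemma
  have hstep : ∀ (m k : Γ), Finsupp.single m (1:ℂ) ∈ S → β + (m:ℂ) + α * k ≠ 0 →
      Finsupp.single (m + k) (1:ℂ) ∈ S := by
    intro m k hm hc
    have h1 := hS k _ hm
    rw [tact_single] at h1
    have h2 := S.smul_mem (β + (m:ℂ) + α * k)⁻¹ h1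
    rwa [smul_smul, inv_mul_cancel₀ hc, one_smul] at h2
  -- extraction lemma: any support point of an element of S gives a basis vector in S
  have hextract : ∀ N : ℕ, ∀ v : Γ →₀ ℂ, v ∈ S → v.support.card ≤ N →
      ∀ m ∈ v.support, Finsupp.single m (1:ℂ) ∈ S := by
    intro N
    induction N with
    | zero =>
      intro v _ hcard m hm
      rw [Nat.le_zero, Finset.card_eq_zero] at hcard
      rw [hcard] at hm
      exact absurd hm (Finset.notMem_empty m)
    | succ N ih =>
      intro v hvS hcard m hm
      by_cases hone : ∀ m' ∈ v.support, m' = m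
      · -- singleton support
        have hsupp : v.support = {m} := by
          apply Finset.eq_singleton_iff_unique_mem.mpr ⟨hm, hone⟩
        have hv : v = Finsupp.single m (v m) := by
          ext s
          by_cases hsm : s = m
          · subst hsm; simp
          · have : s ∉ v.support := by rw [hsupp]; simp [hsm]
            rw [Finsupp.notMem_support_iff.mp this, Finsupp.single_apply]
            simp [Ne.symm hsm]
        have hvm : v m ≠ 0 := Finsupp.mem_support_iff.mp hm
        obtain ⟨c, hcne, hvc⟩ : ∃ c : ℂ, c ≠ 0 ∧ v = Finsupp.single m c := ⟨v m, hvm, hv⟩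
        rw [hvc] at hvS
        have h2 := S.smul_mem c⁻¹ hvS
        rwa [Finsupp.smul_single, smul_eq_mul, inv_mul_cancel₀ hcne] at h2
      · push_neg at hone
        obtain ⟨m', hm'supp, hne⟩ := hone
        have hcoe : (m':ℂ) ≠ (m:ℂ) := fun h => hne (Subtype.coe_injective h)
        -- choose k with 2β + m + m' + k ≠ 0
        obtain ⟨k, hk⟩ : ∃ k : Γ, 2*β + (m:ℂ) + (m':ℂ) + (k:ℂ) ≠ 0 := by
          by_cases h : 2*β + (m:ℂ) + (m':ℂ) = 0
          · refine ⟨m - m', ?_⟩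
            rw [h]
            push_cast
            intro hc
            apply hcoe
            have : (m:ℂ) = m' := by linear_combination hc
            exact this.symm
          · exact ⟨0, by simpa using h⟩
        set g : Γ → ℂ := fun s => (β + (s:ℂ) + α * k) * (β + (s:ℂ) + k - α * k) with hg
        set L := Finsupp.lsum ℂ (fun s : Γ => g s • (Finsupp.lsingle s : ℂ →ₗ[ℂ] (Γ →₀ ℂ)))
          with hL
        have hLv : L v ∈ S := by
          have : L v = tact Γ α β (-k) (tact Γ α β k v) := by
            rw [hL, ← tact_comp]; rfl
          rw [this]
          exact hS _ _ (hS _ _ hvS)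
        set w := L v - g m' • v with hw
        have hwS : w ∈ S := S.sub_mem hLv (S.smul_mem _ hvS)
        have hwapp : ∀ s, w s = (g s - g m') * v s := by
          intro s
          rw [hw]
          rw [Finsupp.sub_apply, Finsupp.smul_apply, smul_eq_mul, hL, lsum_diag_apply, hg]
          ring
        have hgdiff : g m - g m' = ((m:ℂ) - m') * (2*β + (m:ℂ) + (m':ℂ) + k) := by
          rw [hg]; ring
        have hmw : m ∈ w.support := by
          rw [Finsupp.mem_support_iff, hwapp]
          apply mul_ne_zero
          · rw [hgdiff]
            exact mul_ne_zero (sub_ne_zero_of_ne (Ne.symm hcoe)) hk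
          · exact Finsupp.mem_support_iff.mp hm
        have hsub : w.support ⊆ v.support.erase m' := by
          intro s hs
          rw [Finsupp.mem_support_iff, hwapp] at hs
          rw [Finset.mem_erase]
          constructor
          · intro hsm'
            subst hsm'
            simp at hs
          · rw [Finsupp.mem_support_iff]
            intro h0
            exact hs (by rw [h0, mul_zero])
        have hcard' : w.support.card ≤ N := by
          have h1 : w.support.card ≤ (v.support.erase m').card := Finset.card_le_card hsub
          have h2 : (v.support.erase m').card = v.support.card - 1 :=
            Finset.card_erase_of_mem hm'supp
          omega
        exact ih w hwS hcard' m hmw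
  -- a basis vector in S
  obtain ⟨m₀, hm₀⟩ : ∃ m : Γ, Finsupp.single m (1:ℂ) ∈ S := by
    obtain ⟨m, hm⟩ := Finsupp.support_nonempty_iff.mpr hv₀
    exact ⟨m, hextract v₀.support.card v₀ hv₀S le_rfl m hm⟩
  -- all basis vectors in S
  have hall : ∀ m' : Γ, Finsupp.single m' (1:ℂ) ∈ S := by
    intro m'
    have hdir : ∀ m : Γ, Finsupp.single m (1:ℂ) ∈ S →
        β + (m:ℂ) + α * ((m' - m : Γ):ℂ) ≠ 0 → Finsupp.single m' (1:ℂ) ∈ S := by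
      intro m hm hc
      have := hstep m (m' - m) hm hc
      rwa [add_sub_cancel] at this
    rcases hαβ with ⟨hα0, hα1⟩ | ⟨hα01, hβ⟩
    · -- α ∉ {0,1}
      by_cases hd : β + (m₀:ℂ) + α * ((m' - m₀ : Γ):ℂ) ≠ 0
      · exact hdir m₀ hm₀ hd
      push_neg at hd
      by_cases hmm : m₀ = m'
      · exact hmm ▸ hm₀
      have hdne : ((m' - m₀ : Γ):ℂ) ≠ 0 := by
        push_cast
        intro h
        apply hmm
        apply Subtype.coe_injective
        have h2 : (m₀:ℂ) = m' := by linear_combination -h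
        exact h2
      -- pick intermediate step k₁ ∈ {d, d+d} with k₁ ≠ 0 and α k₁ ≠ -(β+m₀)
      set d : Γ := m' - m₀ with hdd
      obtain ⟨k₁, hk₁0, hk₁⟩ : ∃ k₁ : Γ, (k₁:ℂ) ≠ 0 ∧ β + (m₀:ℂ) + α * k₁ ≠ 0 := by
        by_cases hA : β + (m₀:ℂ) + α * (d:ℂ) = 0
        · refine ⟨d + d, ?_, ?_⟩
          · push_cast
            intro h
            apply hdne
            have h2 : (d:ℂ) + d = 0 := h
            have := add_self_eq_zero.mp h2
            exact this
          · push_cast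
            intro h
            apply hdne
            have hβm : β + (m₀:ℂ) = -(α * d) := by linear_combination hA
            have : α * (d:ℂ) = 0 := by linear_combination h - hA
            rcases mul_eq_zero.mp this with h' | h'
            · exact absurd h' hα0
            · exact h'
        · exact ⟨d, hdne, hA⟩
      have hmid : Finsupp.single (m₀ + k₁) (1:ℂ) ∈ S := hstep m₀ k₁ hm₀ hk₁
      apply hdir (m₀ + k₁) hmid
      have hcoe1 : ((m' - (m₀ + k₁) : Γ):ℂ) = (m':ℂ) - m₀ - k₁ := by push_cast; ring
      have hcoe2 : ((m₀ + k₁ : Γ):ℂ) = (m₀:ℂ) + k₁ := by push_cast; ring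
      rw [hcoe1, hcoe2]
      have hdcoe : ((d:Γ):ℂ) = (m':ℂ) - m₀ := by rw [hdd]; push_cast; ring
      intro h
      -- β + m₀ + k₁ + α(m' - m₀ - k₁) = 0; using hd : β + m₀ + α(m'-m₀) = 0 get (1-α)k₁ = 0
      rw [hdcoe] at hd
      have h1α : (1 - α) * (k₁:ℂ) = 0 := by linear_combination h - hd
      rcases mul_eq_zero.mp h1α with h' | h'
      · exact hα1 (by linear_combination -h')
      · exact hk₁0 h'
    · -- α ∈ {0,1}, β ∉ Γ
      have hβnz : ∀ s : Γ, β + (s:ℂ) ≠ 0 := by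
        intro s h
        apply hβ
        have : β = ((-s : Γ):ℂ) := by push_cast; linear_combination h
        rw [this]
        exact (-s).2
      apply hdir m₀ hm₀
      rcases hα01 with h | h
      · rw [h]; simpa using hβnz m₀
      · rw [h, one_mul]
        push_cast
        have := hβnz m'
        intro hc
        exact this (by linear_combination hc)
  -- conclude S = ⊤
  rw [Submodule.eq_top_iff']
  intro v
  have hv : v = v.sum fun m c => Finsupp.single m c := (Finsupp.sum_single v).symm
  rw [hv, Finsupp.sum]
  apply Submodule.sum_mem
  intro m _
  have : Finsupp.single m (v m) = (v m) • Finsupp.single m (1:ℂ) := by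
    rw [Finsupp.smul_single, smul_eq_mul, mul_one]
  rw [this]
  exact S.smul_mem _ (hall m)
end

section
/- The image θ(T(0,0)) under the map θ(v_s) = s v′_s is a W_μ-submodule of codimension 1 in T(1,0), isomorphic to the quotient T(0,0)/ℂv₀. -/
open scoped Classical

/-- The linear map `θ : T(0,0) → T(1,0)`, `θ(v_s) = s v′_s`. -/
noncomputable def theta0 (Γ : AddSubgroup ℂ) : (Γ →₀ ℂ) →ₗ[ℂ] (Γ →₀ ℂ) :=
  Finsupp.lsum ℂ fun m : Γ => ((m : ℂ)) • Finsupp.lsingle m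

lemma theta0_apply (Γ : AddSubgroup ℂ) (v : Γ →₀ ℂ) (m : Γ) :
    theta0 Γ v m = (m : ℂ) * v m := by
  classical
  simp only [theta0, Finsupp.lsum_apply, Finsupp.sum_apply, LinearMap.smul_apply,
    Finsupp.lsingle_apply, Finsupp.smul_single, smul_eq_mul, mul_one]
  rw [Finsupp.sum]
  rw [Finset.sum_eq_single m]
  · by_cases h : m ∈ v.support
    · simp [Finsupp.single_apply]
    · simp [Finsupp.notMem_support_iff.1 h]
  · intro b _ hb
    simp [Finsupp.single_apply, hb]
  · intro h
    simp [Finsupp.notMem_support_iff.1 h]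

lemma theta0_comm (Γ : AddSubgroup ℂ) (k : Γ) :
    (theta0 Γ).comp (tact Γ 0 0 k) = (tact Γ 1 0 k).comp (theta0 Γ) := by
  apply Finsupp.lhom_ext
  intro m c
  simp only [LinearMap.comp_apply, theta0, tact, Finsupp.lsum_single, LinearMap.smul_apply,
    Finsupp.lsingle_apply, Finsupp.smul_single, smul_eq_mul, mul_one, zero_add, one_mul,
    zero_mul, add_zero, map_smul, Finsupp.smul_single]
  push_cast
  ring_nf


/-- The image `θ(T(0,0))` of the `W_μ`-module homomorphism `θ(v_s) = s v′_s` is a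
`W_μ`-submodule of codimension `1` in `T(1,0)`, and it is isomorphic to
`T(0,0)/ℂ v₀`: indeed `θ` is equivariant with kernel exactly `ℂ v₀`. -/
theorem stmt6 (n : ℕ) (μ : Fin n → ℂ)
    (hgen : ∀ r : Fin n → ℤ, r ≠ 0 → (∑ i, μ i * (r i : ℂ)) ≠ 0)
    (Γ : AddSubgroup ℂ)
    (hΓ : ∀ z : ℂ, z ∈ Γ ↔ ∃ r : Fin n → ℤ, z = ∑ i, μ i * (r i : ℂ)) :
    (∀ (k : Γ) (v : Γ →₀ ℂ), theta0 Γ (tact Γ 0 0 k v) = tact Γ 1 0 k (theta0 Γ v)) ∧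
    (∀ (k : Γ) (v : Γ →₀ ℂ), v ∈ LinearMap.range (theta0 Γ) →
      tact Γ 1 0 k v ∈ LinearMap.range (theta0 Γ)) ∧
    LinearMap.ker (theta0 Γ) = Submodule.span ℂ {(Finsupp.single (0 : Γ) (1 : ℂ) : Γ →₀ ℂ)} ∧
    Module.finrank ℂ ((Γ →₀ ℂ) ⧸ LinearMap.range (theta0 Γ)) = 1 := by
  have hcomm : ∀ (k : Γ) (v : Γ →₀ ℂ),
      theta0 Γ (tact Γ 0 0 k v) = tact Γ 1 0 k (theta0 Γ v) := by
    intro k v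
    exact congrFun (congrArg DFunLike.coe (theta0_comm Γ k)) v
  refine ⟨hcomm, ?_, ?_, ?_⟩
  · rintro k v ⟨u, rfl⟩
    exact ⟨tact Γ 0 0 k u, hcomm k u⟩
  · ext v
    simp only [LinearMap.mem_ker]
    constructor
    · intro hv
      have h0 : ∀ m : Γ, (m : ℂ) * v m = 0 := by
        intro m
        have := congrFun (congrArg DFunLike.coe hv) m
        simpa [theta0_apply] using this
      have hv0 : v = Finsupp.single (0 : Γ) (v 0) := by
        ext m
        by_cases hm : m = 0
        · subst hm; simp
        · have hmc : (m : ℂ) ≠ 0 := by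
            simpa [ZeroMemClass.coe_eq_zero] using hm
          have := h0 m
          have : v m = 0 := by
            rcases mul_eq_zero.1 this with h | h
            · exact absurd h hmc
            · exact h
          simp [Finsupp.single_apply, Ne.symm hm, this]
      rw [hv0]
      have : Finsupp.single (0 : Γ) (v 0) = (v 0) • Finsupp.single (0 : Γ) (1 : ℂ) := by
        simp [Finsupp.smul_single]
      rw [this]
      exact Submodule.smul_mem _ _ (Submodule.mem_span_singleton_self _)
    · intro hv
      rcases Submodule.mem_span_singleton.1 hv with ⟨c, rfl⟩
      ext m
      simp [theta0_apply, Finsupp.single_apply]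
      intro h
      simp [h]
  · have hrange : LinearMap.range (theta0 Γ) =
        LinearMap.ker (Finsupp.lapply (0 : Γ) : (Γ →₀ ℂ) →ₗ[ℂ] ℂ) := by
      ext v
      constructor
      · rintro ⟨u, rfl⟩
        simp [LinearMap.mem_ker, Finsupp.lapply_apply, theta0_apply]
      · intro hv
        have hv0 : v 0 = 0 := hv
        refine ⟨Finsupp.onFinset v.support (fun m => ((m : ℂ))⁻¹ * v m) ?_, ?_⟩
        · intro a ha
          rw [Finsupp.mem_support_iff]
          intro h; apply ha; simp [h]
        · ext m
          rw [theta0_apply, Finsupp.onFinset_apply]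
          by_cases hm : m = 0
          · subst hm; simpa using hv0.symm
          · have hmc : (m : ℂ) ≠ 0 := by
              simpa [ZeroMemClass.coe_eq_zero] using hm
            field_simp
    rw [hrange]
    have hsurj : Function.Surjective (Finsupp.lapply (0 : Γ) : (Γ →₀ ℂ) →ₗ[ℂ] ℂ) := by
      intro c
      exact ⟨Finsupp.single 0 c, by simp⟩
    have e := LinearMap.quotKerEquivOfSurjective
      (Finsupp.lapply (0 : Γ) : (Γ →₀ ℂ) →ₗ[ℂ] ℂ) hsurj
    rw [e.finrank_eq]
    exact Module.finrank_self ℂ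
end

section
/- Let M be a weight module over W_μ on which the Laurent polynomial algebra A = ℂ[t₁^{±1},...,tₙ^{±1}] acts compatibly (x(fv) = (xf)v + f(xv)). If one weight space of M is finite-dimensional and nonzero, then all weight spaces have the same dimension and M is a free A-module of finite rank. -/
open scoped Classical

/-- The Laurent polynomial algebra `A = ℂ[t₁^{±1},…,tₙ^{±1}]`. -/
abbrev LaurentA (n : ℕ) := AddMonoidAlgebra ℂ (Fin n → ℤ)

/-- The monomial `t^m ∈ A`. -/
noncomputable def tmon (n : ℕ) (m : Fin n → ℤ) : LaurentA n :=
  AddMonoidAlgebra.single m (1 : ℂ)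

set_option linter.unusedSectionVars false

section aux
variable {n : ℕ} {M : Type} [AddCommGroup M] [Module ℂ M] [Module (LaurentA n) M]
  [IsScalarTower ℂ (LaurentA n) M]

lemma tmon_mul (a b : Fin n → ℤ) : tmon n a * tmon n b = tmon n (a + b) := by
  simp [tmon, AddMonoidAlgebra.single_mul_single]

lemma tmon_zero : tmon n 0 = 1 := rfl

lemma tmon_smul_smul (a b : Fin n → ℤ) (v : M) :
    tmon n a • tmon n b • v = tmon n (a + b) • v := by
  rw [smul_smul, tmon_mul]

lemma tmon_cancel (m : Fin n → ℤ) (v : M) : tmon n m • tmon n (-m) • v = v := by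
  rw [tmon_smul_smul]
  simp [tmon_zero]

lemma csmul_comm (c : ℂ) (a : LaurentA n) (v : M) : a • (c • v) = c • (a • v) :=
  calc a • (c • v) = a • ((c • (1 : LaurentA n)) • v) := by rw [smul_assoc, one_smul]
    _ = (a * (c • 1)) • v := (mul_smul _ _ _).symm
    _ = ((c • 1) * a) • v := by rw [mul_comm]
    _ = (c • 1) • (a • v) := mul_smul _ _ _
    _ = c • (a • v) := by rw [smul_assoc, one_smul]

lemma smul_decomp (f : LaurentA n) (v : M) :
    f • v = ∑ m ∈ f.coeff.support, f.coeff m • (tmon n m • v) := by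
  conv_lhs => rw [← AddMonoidAlgebra.sum_coeff_single f]
  rw [Finsupp.sum, Finset.sum_smul]
  refine Finset.sum_congr rfl fun m _ => ?_
  have h : AddMonoidAlgebra.single m (f.coeff m) = (f.coeff m) • tmon n m := by
    simp [tmon, AddMonoidAlgebra.smul_single]
  rw [h, smul_assoc]

lemma eig_indep {ι : Type*} [DecidableEq ι] (T : M →ₗ[ℂ] M) (c : ι → ℂ)
    (s : Finset ι) :
    ∀ (w : ι → M), (∀ a ∈ s, ∀ b ∈ s, c a = c b → a = b) →
      (∀ m ∈ s, T (w m) = c m • w m) → ∑ m ∈ s, w m = 0 → ∀ m ∈ s, w m = 0 := by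
  induction s using Finset.induction_on with
  | empty => intro w _ _ _ m hm; exact absurd hm (Finset.notMem_empty m)
  | insert a s ha ih =>
    intro w hc hw hsum
    have hsum' : ∑ m ∈ s, (c m - c a) • w m = 0 := by
      have h1 : T (∑ m ∈ insert a s, w m) = 0 := by rw [hsum, map_zero]
      rw [map_sum] at h1
      have h2 : ∑ m ∈ insert a s, (T (w m) - c a • w m) = 0 := by
        rw [Finset.sum_sub_distrib, h1, ← Finset.smul_sum, hsum, smul_zero, sub_zero]
      have h3 : ∀ m ∈ insert a s, T (w m) - c a • w m = (c m - c a) • w m := by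
        intro m hm; rw [hw m hm, sub_smul]
      rw [Finset.sum_congr rfl h3, Finset.sum_insert ha, sub_self, zero_smul, zero_add] at h2
      exact h2
    have hz : ∀ m ∈ s, (c m - c a) • w m = 0 := by
      refine ih (fun m => (c m - c a) • w m) ?_ ?_ hsum'
      · intro x hx y hy hxy
        exact hc x (Finset.mem_insert_of_mem hx) y (Finset.mem_insert_of_mem hy) hxy
      · intro m hm
        rw [map_smul, hw m (Finset.mem_insert_of_mem hm), smul_comm]
    have hws : ∀ m ∈ s, w m = 0 := by
      intro m hm
      have hne : c m - c a ≠ 0 := by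
        intro h
        have h2 := hc m (Finset.mem_insert_of_mem hm) a (Finset.mem_insert_self a s)
          (sub_eq_zero.mp h)
        exact ha (h2 ▸ hm)
      have := hz m hm
      rcases smul_eq_zero.mp this with h | h
      · exact absurd h hne
      · exact h
    intro m hm
    rcases Finset.mem_insert.mp hm with rfl | hm'
    · have : w m + ∑ x ∈ s, w x = 0 := by rwa [Finset.sum_insert ha] at hsum
      rw [Finset.sum_eq_zero hws] at this
      simpa using this
    · exact hws m hm'

end aux

section weight
variable {n : ℕ} {M : Type} [AddCommGroup M] [Module ℂ M] [Module (LaurentA n) M]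
  [IsScalarTower ℂ (LaurentA n) M]
  {μ : Fin n → ℂ} {β : ℂ} {E : (Fin n → ℤ) → M →ₗ[ℂ] M}

/-- the weight space -/
noncomputable def Kw (E : (Fin n → ℤ) → M →ₗ[ℂ] M) (μ : Fin n → ℂ) (β : ℂ)
    (r : Fin n → ℤ) : Submodule ℂ M :=
  LinearMap.ker (E 0 - (β + ∑ i, μ i * (r i : ℂ)) • (LinearMap.id : M →ₗ[ℂ] M))

lemma mem_Kw {r : Fin n → ℤ} {v : M} :
    v ∈ Kw E μ β r ↔ E 0 v = (β + ∑ i, μ i * (r i : ℂ)) • v := by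
  simp [Kw, LinearMap.mem_ker, LinearMap.sub_apply, LinearMap.smul_apply, sub_eq_zero]

lemma cval_inj (hgen : ∀ r : Fin n → ℤ, r ≠ 0 → (∑ i, μ i * (r i : ℂ)) ≠ 0)
    {a b : Fin n → ℤ} (h : β + ∑ i, μ i * (a i : ℂ) = β + ∑ i, μ i * (b i : ℂ)) :
    a = b := by
  by_contra hne
  apply hgen (a - b) (sub_ne_zero.mpr hne)
  have : ∑ i, μ i * ((a - b) i : ℂ) = (∑ i, μ i * (a i : ℂ)) - ∑ i, μ i * (b i : ℂ) := by
    rw [← Finset.sum_sub_distrib]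
    refine Finset.sum_congr rfl fun i _ => ?_
    push_cast [Pi.sub_apply]
    ring
  rw [this]
  have := add_left_cancel h
  rw [this, sub_self]

lemma shift_mem
    (hcompat : ∀ (s m : Fin n → ℤ) (v : M),
      E s (tmon n m • v) = (∑ i, μ i * (m i : ℂ)) • (tmon n (m + s) • v) + tmon n m • E s v)
    {r : Fin n → ℤ} (m : Fin n → ℤ) {v : M} (hv : v ∈ Kw E μ β r) :
    tmon n m • v ∈ Kw E μ β (r + m) := by
  rw [mem_Kw] at hv ⊢
  have h := hcompat 0 m v
  rw [add_zero] at h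
  rw [h, hv, csmul_comm]
  rw [← add_smul]
  congr 1
  have : ∑ i, μ i * ((r + m) i : ℂ) = (∑ i, μ i * (m i : ℂ)) + ∑ i, μ i * (r i : ℂ) := by
    rw [← Finset.sum_add_distrib]
    refine Finset.sum_congr rfl fun i _ => ?_
    push_cast [Pi.add_apply]
    ring
  rw [this]
  ring

/-- multiplication by `t^m` as a ℂ-linear automorphism of `M` -/
noncomputable def tequiv (n : ℕ) (M : Type) [AddCommGroup M] [Module ℂ M]
    [Module (LaurentA n) M] [IsScalarTower ℂ (LaurentA n) M] (m : Fin n → ℤ) : M ≃ₗ[ℂ] M where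
  toFun v := tmon n m • v
  map_add' x y := smul_add _ x y
  map_smul' c v := (csmul_comm c _ v)
  invFun v := tmon n (-m) • v
  left_inv v := by show tmon n (-m) • tmon n m • v = v; rw [tmon_smul_smul]; simp [tmon_zero]
  right_inv v := by show tmon n m • tmon n (-m) • v = v; exact tmon_cancel m v

lemma Kw_map
    (hcompat : ∀ (s m : Fin n → ℤ) (v : M),
      E s (tmon n m • v) = (∑ i, μ i * (m i : ℂ)) • (tmon n (m + s) • v) + tmon n m • E s v)
    (r m : Fin n → ℤ) :
    (Kw E μ β r).map (tequiv n M m : M →ₗ[ℂ] M) = Kw E μ β (r + m) := by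
  ext x
  constructor
  · rintro ⟨v, hv, rfl⟩
    exact shift_mem hcompat m hv
  · intro hx
    refine ⟨tmon n (-m) • x, ?_, tmon_cancel m x⟩
    have := shift_mem hcompat (-m) hx
    have he : r + m + -m = r := by abel
    rwa [he] at this

end weight


/-- Let `M` be a weight module over `W_μ` carrying a compatible action of
`A = ℂ[t₁^{±1},…,tₙ^{±1}]` (i.e. `x(fv) = (xf)v + f(xv)`), supported on the coset
`β + Γ_μ`.  Here `E s` is the action of `t^s d_μ`, the compatibility on monomials
reads `E s (t^m v) = (μ·m)(t^{m+s} v) + t^m (E s v)`, and the weight space of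
weight `λ` is the kernel of `E 0 - λ`.  If one weight space is nonzero and
finite-dimensional, then all weight spaces have the same (finite) dimension and
`M` is a free `A`-module of finite rank. -/
theorem stmt8 (n : ℕ) (μ : Fin n → ℂ)
    (hgen : ∀ r : Fin n → ℤ, r ≠ 0 → (∑ i, μ i * (r i : ℂ)) ≠ 0)
    (M : Type) [AddCommGroup M] [Module ℂ M] [Module (LaurentA n) M]
    [IsScalarTower ℂ (LaurentA n) M]
    (E : (Fin n → ℤ) → M →ₗ[ℂ] M)
    (hLie : ∀ s r : Fin n → ℤ, E s * E r - E r * E s = (∑ i, μ i * ((r i : ℂ) - s i)) • E (s + r))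
    (hcompat : ∀ (s m : Fin n → ℤ) (v : M),
      E s (tmon n m • v) = (∑ i, μ i * (m i : ℂ)) • (tmon n (m + s) • v) + tmon n m • E s v)
    (β : ℂ)
    (hsupp : ⨆ r : Fin n → ℤ,
      LinearMap.ker (E 0 - (β + ∑ i, μ i * (r i : ℂ)) • (LinearMap.id : M →ₗ[ℂ] M)) = ⊤)
    (hfd : ∃ r₀ : Fin n → ℤ,
      LinearMap.ker (E 0 - (β + ∑ i, μ i * (r₀ i : ℂ)) • (LinearMap.id : M →ₗ[ℂ] M)) ≠ ⊥ ∧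
      FiniteDimensional ℂ
        (LinearMap.ker (E 0 - (β + ∑ i, μ i * (r₀ i : ℂ)) • (LinearMap.id : M →ₗ[ℂ] M)))) :
    (∀ r r' : Fin n → ℤ,
      Module.finrank ℂ
        (LinearMap.ker (E 0 - (β + ∑ i, μ i * (r i : ℂ)) • (LinearMap.id : M →ₗ[ℂ] M))) =
      Module.finrank ℂ
        (LinearMap.ker (E 0 - (β + ∑ i, μ i * (r' i : ℂ)) • (LinearMap.id : M →ₗ[ℂ] M)))) ∧
    Module.Free (LaurentA n) M ∧ Module.Finite (LaurentA n) M := by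
  obtain ⟨r₀, hne, hfin⟩ := hfd
  have hfin' : FiniteDimensional ℂ (Kw E μ β r₀) := hfin
  -- Part 1: equality of finranks
  have part1 : ∀ r r' : Fin n → ℤ,
      Module.finrank ℂ (Kw E μ β r) = Module.finrank ℂ (Kw E μ β r') := by
    intro r r'
    have h := Kw_map (β := β) hcompat r (r' - r)
    rw [show r + (r' - r) = r' by abel] at h
    exact LinearEquiv.finrank_eq (LinearEquiv.ofSubmodules (tequiv n M (r' - r)) _ _ h)
  -- the basis of the distinguished weight space
  set K₀ := Kw E μ β r₀ with hK₀
  let b := Module.finBasis ℂ K₀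
  set v : Fin (Module.finrank ℂ K₀) → M := fun j => ((b j : M)) with hv
  have hvmem : ∀ j, v j ∈ K₀ := fun j => (b j).2
  -- spanning
  have hspan : Submodule.span (LaurentA n) (Set.range v) = ⊤ := by
    rw [eq_top_iff]
    intro x _
    have hx : x ∈ (⨆ r : Fin n → ℤ, Kw E μ β r) := by
      rw [show (⨆ r : Fin n → ℤ, Kw E μ β r) = ⊤ from hsupp]; trivial
    have hle : (⨆ r : Fin n → ℤ, Kw E μ β r) ≤
        (Submodule.span (LaurentA n) (Set.range v)).restrictScalars ℂ := by
      refine iSup_le fun r => ?_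
      intro w hw
      have hu : tmon n (r₀ - r) • w ∈ K₀ := by
        have := shift_mem hcompat (r₀ - r) hw
        rwa [show r + (r₀ - r) = r₀ by abel] at this
      have hu1 : tmon n (r₀ - r) • w ∈ Submodule.span ℂ (Set.range v) := by
        have hb : (⟨tmon n (r₀ - r) • w, hu⟩ : K₀) ∈ Submodule.span ℂ (Set.range ⇑b) :=
          b.mem_span _
        have := Submodule.mem_map_of_mem (f := K₀.subtype) hb
        rw [Submodule.map_span, ← Set.range_comp] at this
        exact this
      have hu2 : tmon n (r₀ - r) • w ∈ Submodule.span (LaurentA n) (Set.range v) := by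
        have hle2 : Submodule.span ℂ (Set.range v) ≤
            (Submodule.span (LaurentA n) (Set.range v)).restrictScalars ℂ :=
          Submodule.span_le.mpr (fun y hy => Submodule.subset_span hy)
        exact hle2 hu1
      have hw' : w = tmon n (r - r₀) • (tmon n (r₀ - r) • w) := by
        rw [tmon_smul_smul, show r - r₀ + (r₀ - r) = 0 by abel, tmon_zero, one_smul]
      rw [Submodule.restrictScalars_mem, hw']
      exact Submodule.smul_mem _ _ hu2
    exact hle hx
  -- linear independence over the Laurent algebra
  have hli : LinearIndependent (LaurentA n) v := by
    rw [Fintype.linearIndependent_iff]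
    intro g hg j
    set S : Finset (Fin n → ℤ) := Finset.univ.biUnion (fun j => (g j).coeff.support) with hS
    set w : (Fin n → ℤ) → M := fun m => tmon n m • (∑ j, (g j).coeff m • v j) with hwdef
    have hmemS : ∀ j m, (g j).coeff m ≠ 0 → m ∈ S := by
      intro j m hm
      exact Finset.mem_biUnion.mpr ⟨j, Finset.mem_univ j, Finsupp.mem_support_iff.mpr hm⟩
    have hinner : ∀ m, (∑ j, (g j).coeff m • v j) ∈ K₀ :=
      fun m => Submodule.sum_mem _ fun j _ => Submodule.smul_mem _ _ (hvmem j)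
    have hsum0 : ∑ m ∈ S, w m = 0 := by
      have step1 : ∀ j, g j • v j = ∑ m ∈ S, (g j).coeff m • (tmon n m • v j) := by
        intro j
        rw [smul_decomp]
        refine Finset.sum_subset ?_ ?_
        · intro m hm
          exact hmemS j m (Finsupp.mem_support_iff.mp hm)
        · intro m _ hm
          rw [Finsupp.notMem_support_iff.mp hm, zero_smul]
      calc ∑ m ∈ S, w m = ∑ m ∈ S, ∑ j, (g j).coeff m • (tmon n m • v j) := by
            refine Finset.sum_congr rfl fun m _ => ?_
            rw [hwdef]
            simp only [Finset.smul_sum]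
            exact Finset.sum_congr rfl fun j _ => csmul_comm _ _ _
        _ = ∑ j, ∑ m ∈ S, (g j).coeff m • (tmon n m • v j) := Finset.sum_comm
        _ = ∑ j, g j • v j := by
            refine Finset.sum_congr rfl fun j _ => (step1 j).symm
        _ = 0 := hg
    have heig : ∀ m ∈ S, E 0 (w m) = (β + ∑ i, μ i * ((r₀ + m) i : ℂ)) • w m := by
      intro m _
      exact mem_Kw.mp (shift_mem hcompat m (hinner m))
    have hz : ∀ m ∈ S, w m = 0 := by
      refine eig_indep (E 0) (fun m => β + ∑ i, μ i * ((r₀ + m) i : ℂ)) S w ?_ heig hsum0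
      intro a _ b' _ hab
      have := cval_inj hgen hab
      exact add_left_cancel this
    -- conclude coefficients vanish
    ext m
    by_cases hmS : m ∈ S
    · have hwm := hz m hmS
      have hu0 : (∑ j, (g j).coeff m • v j) = 0 := by
        have : tmon n (-m) • (tmon n m • (∑ j, (g j).coeff m • v j)) = 0 := by
          rw [show tmon n m • (∑ j, (g j).coeff m • v j) = w m from rfl, hwm, smul_zero]
        rwa [tmon_smul_smul, show -m + m = 0 by abel, tmon_zero, one_smul] at this
      have hsub : ((∑ j, (g j).coeff m • b j : K₀) : M) = 0 := by
        rw [← hu0]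
        push_cast
        rfl
      have : (∑ j, (g j).coeff m • b j : K₀) = 0 := Subtype.ext hsub
      exact Fintype.linearIndependent_iff.mp b.linearIndependent (fun j => (g j).coeff m) this j
    · by_contra h
      exact hmS (hmemS j m h)
  -- assemble
  have B : Module.Basis (Fin (Module.finrank ℂ K₀)) (LaurentA n) M :=
    Module.Basis.mk hli (by rw [hspan])
  exact ⟨part1, Module.Free.of_basis B, Module.Finite.of_basis B⟩
end

section
/- For a cuspidal AW_μ-module M = A ⊗ U with U = M_β, the operators D(s) = t^{-s}∘(t^s d_μ) : U → U satisfy the relation [D(s), D(m)] = (μ·m)(D(m+s) − D(m)) − (μ·s)(D(m+s) − D(s)) for all s, m ∈ ℤⁿ. -/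
open scoped Classical

/-- For a cuspidal `AW_μ`-module `M` with weight space `U = M_β`, the operators
`D(s) = t^{-s} ∘ (t^s d_μ)` satisfy
`[D(s), D(m)] = (μ·m)(D(m+s) − D(m)) − (μ·s)(D(m+s) − D(s))` on `U`.
Here `E s` is the action of `t^s d_μ`, so `D s v = t^{-s} • (E s v)`, and
`v ∈ U = M_β` means `E 0 v = β v`. -/
theorem stmt9 (n : ℕ) (μ : Fin n → ℂ)
    (hgen : ∀ r : Fin n → ℤ, r ≠ 0 → (∑ i, μ i * (r i : ℂ)) ≠ 0)
    (M : Type) [AddCommGroup M] [Module ℂ M] [Module (LaurentA n) M]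
    [IsScalarTower ℂ (LaurentA n) M]
    (E : (Fin n → ℤ) → M →ₗ[ℂ] M)
    (hLie : ∀ s r : Fin n → ℤ, E s * E r - E r * E s = (∑ i, μ i * ((r i : ℂ) - s i)) • E (s + r))
    (hcompat : ∀ (s m : Fin n → ℤ) (v : M),
      E s (tmon n m • v) = (∑ i, μ i * (m i : ℂ)) • (tmon n (m + s) • v) + tmon n m • E s v)
    (β : ℂ)
    (hcusp : ∃ C : ℕ, ∀ lam : ℂ,
      Module.finrank ℂ (LinearMap.ker (E 0 - lam • (LinearMap.id : M →ₗ[ℂ] M))) ≤ C)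
    (D : (Fin n → ℤ) → M → M)
    (hD : ∀ (s : Fin n → ℤ) (v : M), D s v = tmon n (-s) • E s v) :
    ∀ (s m : Fin n → ℤ) (v : M), E 0 v = β • v →
      D s (D m v) - D m (D s v)
        = (∑ i, μ i * (m i : ℂ)) • (D (m + s) v - D m v)
          - (∑ i, μ i * (s i : ℂ)) • (D (m + s) v - D s v) := by
  intro s m v _
  have tsmul : ∀ (a b : Fin n → ℤ) (x : M), tmon n a • tmon n b • x = tmon n (a + b) • x := by
    intro a b x
    rw [← mul_smul]
    congr 1
    simp [tmon, AddMonoidAlgebra.single_mul_single]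
  have hsum : ∀ r : Fin n → ℤ, (∑ i, μ i * ((-r) i : ℂ)) = -(∑ i, μ i * (r i : ℂ)) := by
    intro r
    rw [← Finset.sum_neg_distrib]
    apply Finset.sum_congr rfl
    intro i _
    simp only [Pi.neg_apply, Int.cast_neg]
    ring
  have key : ∀ (a b : Fin n → ℤ),
      D a (D b v) = -((∑ i, μ i * (b i : ℂ)) • D b v) + tmon n (-(a + b)) • E a (E b v) := by
    intro a b
    rw [hD, hD, hcompat, smul_add, smul_comm, tsmul, tsmul, hsum]
    have h1 : -a + (-b + a) = -b := by abel
    have h2 : -a + -b = -(a + b) := by abel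
    rw [h1, h2, neg_smul]
  have hms : m + s = s + m := by abel
  rw [key, key, hms]
  have hcomm : E s (E m v) - E m (E s v)
      = (∑ i, μ i * ((m i : ℂ) - s i)) • E (s + m) v := by
    have := congrArg (fun f : M →ₗ[ℂ] M => f v) (hLie s m)
    simpa using this
  have hEms : tmon n (-(s + m)) • (E s (E m v)) - tmon n (-(s + m)) • (E m (E s v))
      = (∑ i, μ i * ((m i : ℂ) - s i)) • (tmon n (-(s + m)) • E (s + m) v) := by
    rw [← smul_sub, hcomm, smul_comm]
  have hsplit : (∑ i, μ i * ((m i : ℂ) - s i))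
      = (∑ i, μ i * (m i : ℂ)) - (∑ i, μ i * (s i : ℂ)) := by
    rw [← Finset.sum_sub_distrib]
    apply Finset.sum_congr rfl
    intro i _
    ring
  have hDsm : D (s + m) v = tmon n (-(s + m)) • E (s + m) v := hD _ _
  calc -((∑ i, μ i * (m i : ℂ)) • D m v) + tmon n (-(s + m)) • (E s) ((E m) v) -
      (-((∑ i, μ i * (s i : ℂ)) • D s v) + tmon n (-(s + m)) • (E m) ((E s) v))
      = (tmon n (-(s + m)) • (E s (E m v)) - tmon n (-(s + m)) • (E m (E s v)))
        - (∑ i, μ i * (m i : ℂ)) • D m v + (∑ i, μ i * (s i : ℂ)) • D s v := by abel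
    _ = _ := by
        rw [hEms, hsplit, sub_smul, ← hDsm, smul_sub, smul_sub]
        abel
end

section
/- Let μ ∈ ℂⁿ be generic and suppose D : ℤⁿ → End(U) (U finite-dimensional) satisfies the relation [D(s),D(m)] = (μ·m)(D(m+s)−D(m)) − (μ·s)(D(m+s)−D(s)), and suppose the restriction of D to every line ℤ·m (m ∈ ℤⁿ) is polynomial in the integer parameter. Then D agrees on all of ℤⁿ with an End(U)-valued polynomial in s = (s₁,...,sₙ) whose constant term is D(0). -/
set_option linter.unusedSectionVars false
set_option maxHeartbeats 1000000

open Polynomial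

namespace Stmt12

noncomputable section

abbrev A (j : ℕ) := MvPolynomial (Fin j) ℂ

def evZ {j : ℕ} (s : Fin j → ℤ) : A j →+* ℂ :=
  MvPolynomial.eval fun i => ((s i : ℤ) : ℂ)

def EV {j : ℕ} (s : Fin j → ℤ) (k : ℤ) : Polynomial (A j) →+* ℂ :=
  (Polynomial.evalRingHom ((k : ℤ) : ℂ)).comp (Polynomial.mapRingHom (evZ s))

lemma EV_apply {j : ℕ} (s : Fin j → ℤ) (k : ℤ) (Q : Polynomial (A j)) :
    EV s k Q = Polynomial.eval ((k : ℤ) : ℂ) (Q.map (evZ s)) := rfl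

@[simp] lemma EV_C {j : ℕ} (s : Fin j → ℤ) (k : ℤ) (p : A j) :
    EV s k (Polynomial.C p) = evZ s p := by simp [EV_apply]

@[simp] lemma EV_X {j : ℕ} (s : Fin j → ℤ) (k : ℤ) :
    EV s k (Polynomial.X) = (k : ℂ) := by simp [EV_apply]

lemma EV_comp_X_sub_one {j : ℕ} (s : Fin j → ℤ) (k : ℤ) (Q : Polynomial (A j)) :
    EV s k (Q.comp (Polynomial.X - 1)) = EV s (k - 1) Q := by
  simp only [EV_apply, Polynomial.map_comp, Polynomial.map_sub, Polynomial.map_X,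
    Polynomial.map_one, Polynomial.eval_comp, Polynomial.eval_sub, Polynomial.eval_X,
    Polynomial.eval_one]
  push_cast
  ring_nf

lemma eq_zero_of_int_roots (p : ℂ[X]) (h : ∀ x : ℤ, p.eval ((x : ℤ) : ℂ) = 0) : p = 0 :=
  p.eq_zero_of_infinite_isRoot
    (Set.infinite_of_injective_forall_mem (f := fun x : ℤ => ((x : ℤ) : ℂ))
      Int.cast_injective (fun a => h a))

lemma eq_zero_of_int_roots' (p : ℂ[X]) (h : ∀ x : ℤ, x ≠ 0 → p.eval ((x : ℤ) : ℂ) = 0) : p = 0 := by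
  apply p.eq_zero_of_infinite_isRoot
  apply Set.infinite_of_injective_forall_mem (f := fun m : ℕ => (((m : ℤ) + 1 : ℤ) : ℂ))
  · intro a b hab
    have := Int.cast_injective (α := ℂ) hab
    omega
  · intro m
    exact h ((m : ℤ) + 1) (by omega)

lemma mv_zero : ∀ {j : ℕ} (P : A j), (∀ s : Fin j → ℤ, evZ s P = 0) → P = 0 := by
  intro j
  induction j with
  | zero =>
    intro P h
    obtain ⟨c, rfl⟩ := MvPolynomial.C_surjective (Fin 0) P
    have := h 0
    simp only [evZ, MvPolynomial.eval_C] at this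
    simp [this]
  | succ j ih =>
    intro P h
    set Q := MvPolynomial.finSuccEquiv ℂ j P with hQdef
    have hPQ : ∀ (s : Fin j → ℤ) (x : ℤ),
        Polynomial.eval ((x : ℤ) : ℂ) (Q.map (evZ s)) = 0 := by
      intro s x
      have hcons : (fun i => (((Fin.cons x s : Fin (j+1) → ℤ) i : ℤ) : ℂ))
          = Fin.cons ((x : ℤ) : ℂ) (fun i => ((s i : ℤ) : ℂ)) := by
        funext i
        refine Fin.cases ?_ ?_ i <;> simp
      have h2 := h (Fin.cons x s)
      rw [evZ] at h2
      rw [hcons] at h2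
      rw [MvPolynomial.eval_eq_eval_mv_eval'] at h2
      exact h2
    have hQ0 : Q = 0 := by
      apply Polynomial.ext
      intro m
      rw [Polynomial.coeff_zero]
      apply ih
      intro s
      have hmap := eq_zero_of_int_roots (Q.map (evZ s)) (fun x => hPQ s x)
      have := congrArg (fun p => Polynomial.coeff p m) hmap
      simpa [Polynomial.coeff_map] using this
    have : P = (MvPolynomial.finSuccEquiv ℂ j).symm Q := by
      rw [hQdef]; simp
    rw [this, hQ0, map_zero]

lemma pol_zero {j : ℕ} (Q : Polynomial (A j)) (h : ∀ (s : Fin j → ℤ) (k : ℤ), EV s k Q = 0) :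
    Q = 0 := by
  apply Polynomial.ext
  intro m
  rw [Polynomial.coeff_zero]
  apply mv_zero
  intro s
  have hm : Q.map (evZ s) = 0 := eq_zero_of_int_roots _ (fun x => h s x)
  simpa [Polynomial.coeff_map] using congrArg (fun p => Polynomial.coeff p m) hm


variable {U : Type} [AddCommGroup U] [Module ℂ U] [FiniteDimensional ℂ U]

/-- componentwise polynomial in `(s, k)` -/
def SP (j : ℕ) (g : (Fin j → ℤ) → ℤ → Module.End ℂ U) : Prop :=
  ∀ φ : Module.End ℂ U →ₗ[ℂ] ℂ, ∃ Q : Polynomial (A j), ∀ s k, φ (g s k) = EV s k Q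

omit [FiniteDimensional ℂ U] in
omit [FiniteDimensional ℂ U] in
lemma SP.add {j : ℕ} {g₁ g₂ : (Fin j → ℤ) → ℤ → Module.End ℂ U} (h1 : SP j g₁) (h2 : SP j g₂) :
    SP j (fun s k => g₁ s k + g₂ s k) := by
  intro φ
  obtain ⟨Q1, hQ1⟩ := h1 φ
  obtain ⟨Q2, hQ2⟩ := h2 φ
  exact ⟨Q1 + Q2, fun s k => by rw [map_add, hQ1, hQ2, map_add]⟩

omit [FiniteDimensional ℂ U] in
lemma SP.sub {j : ℕ} {g₁ g₂ : (Fin j → ℤ) → ℤ → Module.End ℂ U} (h1 : SP j g₁) (h2 : SP j g₂) :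
    SP j (fun s k => g₁ s k - g₂ s k) := by
  intro φ
  obtain ⟨Q1, hQ1⟩ := h1 φ
  obtain ⟨Q2, hQ2⟩ := h2 φ
  exact ⟨Q1 - Q2, fun s k => by rw [map_sub, hQ1, hQ2, map_sub]⟩

omit [FiniteDimensional ℂ U] in
lemma SP.smul {j : ℕ} {w : Polynomial (A j)} {c : (Fin j → ℤ) → ℤ → ℂ}
    (hw : ∀ s k, c s k = EV s k w) {g : (Fin j → ℤ) → ℤ → Module.End ℂ U} (hg : SP j g) :
    SP j (fun s k => c s k • g s k) := by
  intro φ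
  obtain ⟨Q, hQ⟩ := hg φ
  refine ⟨w * Q, fun s k => ?_⟩
  rw [map_smul, smul_eq_mul, hQ, hw, map_mul]

lemma SP.mul {j : ℕ} {g₁ g₂ : (Fin j → ℤ) → ℤ → Module.End ℂ U} (h1 : SP j g₁) (h2 : SP j g₂) :
    SP j (fun s k => g₁ s k * g₂ s k) := by
  intro φ
  set bas := Module.finBasis ℂ (Module.End ℂ U) with hbas
  choose Qg hQg using fun i => h1 (bas.coord i)
  choose Qh hQh using fun i => h2 (φ ∘ₗ LinearMap.mulLeft ℂ (bas i))
  refine ⟨∑ i, Qg i * Qh i, fun s k => ?_⟩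
  have expand : g₁ s k * g₂ s k = ∑ i, (bas.repr (g₁ s k) i) • (bas i * g₂ s k) := by
    conv_lhs => rw [← bas.sum_repr (g₁ s k)]
    rw [Finset.sum_mul]
    exact Finset.sum_congr rfl fun i _ => by rw [smul_mul_assoc]
  simp only []
  rw [expand, map_sum, map_sum]
  refine Finset.sum_congr rfl fun i _ => ?_
  have e1 : bas.repr (g₁ s k) i = EV s k (Qg i) := by
    rw [← hQg i s k]; simp [Module.Basis.coord_apply]
  have e2 : φ (bas i * g₂ s k) = EV s k (Qh i) := by
    rw [← hQh i s k]; simp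
  rw [map_smul, smul_eq_mul, e1, e2, map_mul]

-- index / vector helpers
def iota (n j : ℕ) (s : Fin j → ℤ) : Fin n → ℤ := fun i => if h : (i : ℕ) < j then s ⟨i, h⟩ else 0

def sgl {n : ℕ} (p : Fin n) (k : ℤ) : Fin n → ℤ := fun i => if i = p then k else 0

lemma iota_zero_fun (n j : ℕ) : iota n j (0 : Fin j → ℤ) = 0 := by
  funext i; simp [iota]

lemma iota_zero (n : ℕ) (s : Fin 0 → ℤ) : iota n 0 s = 0 := by
  funext i; simp [iota]

lemma iota_top (n : ℕ) (s : Fin n → ℤ) : iota n n s = s := by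
  funext i; simp [iota, i.isLt]

lemma sgl_zero {n : ℕ} (p : Fin n) : sgl p 0 = 0 := by
  funext i; simp [sgl]

lemma sgl_add_one {n : ℕ} (p : Fin n) (k : ℤ) :
    sgl p (k - 1) + sgl p 1 = sgl p k := by
  funext i; simp only [sgl, Pi.add_apply]; split <;> ring

lemma sgl_one_ne_zero {n : ℕ} (p : Fin n) : sgl p 1 ≠ 0 := by
  intro h
  have := congrFun h p
  simp [sgl] at this

lemma iota_succ (n j : ℕ) (hj : j < n) (s : Fin (j+1) → ℤ) :
    iota n (j+1) s = iota n j (fun i => s i.castSucc) + sgl ⟨j, hj⟩ (s (Fin.last j)) := by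
  funext i
  simp only [iota, sgl, Pi.add_apply]
  rcases lt_trichotomy (i : ℕ) j with h | h | h
  · rw [dif_pos (h.trans (Nat.lt_succ_self j)), dif_pos h, if_neg (by
      intro hc; rw [hc] at h; simp at h), add_zero]
    congr 1
  · rw [dif_pos (by omega), dif_neg (by omega), if_pos (Fin.ext h), zero_add]
    congr 1
    exact Fin.ext (by simp [Fin.last, h])
  · rw [dif_neg (by omega), dif_neg (by omega), if_neg (by
      intro hc; rw [hc] at h; simp at h), add_zero]


abbrev muv {n : ℕ} (μ : Fin n → ℂ) (m : Fin n → ℤ) : ℂ := ∑ i, μ i * ((m i : ℤ) : ℂ)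


lemma muv_add {n : ℕ} (μ : Fin n → ℂ) (a b : Fin n → ℤ) :
    muv μ (a + b) = muv μ a + muv μ b := by
  simp only [muv, Pi.add_apply, Int.cast_add, mul_add]
  rw [Finset.sum_add_distrib]

lemma muv_sgl {n : ℕ} (μ : Fin n → ℂ) (p : Fin n) (k : ℤ) :
    muv μ (sgl p k) = μ p * (k : ℂ) := by
  rw [muv, Finset.sum_eq_single p]
  · simp [sgl]
  · intro b _ hb; simp [sgl, hb]
  · intro h; exact absurd (Finset.mem_univ p) h

lemma muv_iota {n j : ℕ} (hj : j ≤ n) (μ : Fin n → ℂ) (s : Fin j → ℤ) :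
    muv μ (iota n j s) = ∑ i : Fin j, μ (Fin.castLE hj i) * ((s i : ℤ) : ℂ) := by
  rw [muv]
  rw [← Finset.sum_subset (Finset.subset_univ (Finset.univ.map (Fin.castLEEmb hj)))
    (fun x _ hx => ?_)]
  · rw [Finset.sum_map]
    refine Finset.sum_congr rfl fun i _ => ?_
    have h1 : iota n j s ((Fin.castLEEmb hj) i) = s i := by
      simp only [iota, Fin.castLEEmb_apply, Fin.coe_castLE]
      rw [dif_pos i.isLt]
    rw [h1]
    rfl
  · have hxj : ¬ (x : ℕ) < j := by
      intro hlt
      apply hx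
      simp only [Finset.mem_map, Finset.mem_univ, true_and]
      exact ⟨⟨(x : ℕ), hlt⟩, Fin.ext rfl⟩
    simp [iota, hxj]

set_option maxHeartbeats 1000000 in
lemma step {n : ℕ} {μ : Fin n → ℂ}
    {D : (Fin n → ℤ) → Module.End ℂ U}
    (hgen : ∀ r : Fin n → ℤ, r ≠ 0 → muv μ r ≠ 0)
    (hstar : ∀ m s : Fin n → ℤ, (muv μ m - muv μ s) • D (m + s) =
      (D s * D m - D m * D s) + (muv μ m • D m - muv μ s • D s))
    (hline : ∀ m : Fin n → ℤ, ∃ c : ℕ →₀ Module.End ℂ U,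
      ∀ x : ℤ, D (x • m) = c.sum fun j T => ((x : ℤ) : ℂ) ^ j • T)
    {j : ℕ} (hj : j < n)
    (IH : ∀ φ : Module.End ℂ U →ₗ[ℂ] ℂ, ∃ P : A j, ∀ s : Fin j → ℤ,
      φ (D (iota n j s)) = evZ s P) :
    ∀ φ : Module.End ℂ U →ₗ[ℂ] ℂ, ∃ P : A (j+1), ∀ s : Fin (j+1) → ℤ,
      φ (D (iota n (j+1) s)) = evZ s P := by
  set jn : Fin n := ⟨j, hj⟩ with hjn
  have hb : μ jn ≠ 0 := by
    have h := hgen (sgl jn 1) (sgl_one_ne_zero jn)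
    rwa [muv_sgl, Int.cast_one, mul_one] at h
  set Lp : A j := ∑ i : Fin j, (MvPolynomial.C (μ (Fin.castLE hj.le i)) * MvPolynomial.X i)
    with hLpdef
  have hLps : ∀ s : Fin j → ℤ, evZ s Lp = muv μ (iota n j s) := by
    intro s
    rw [muv_iota hj.le, hLpdef, evZ, map_sum]
    exact Finset.sum_congr rfl fun i _ => by simp
  -- the (one-variable) polynomial for the e_j line
  have hq : ∀ φ : Module.End ℂ U →ₗ[ℂ] ℂ, ∃ p : ℂ[X],
      ∀ k : ℤ, φ (D (sgl jn k)) = p.eval ((k : ℤ) : ℂ) := by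
    obtain ⟨c, hc⟩ := hline (sgl jn 1)
    have hsm : ∀ k : ℤ, k • sgl jn 1 = sgl jn k := by
      intro k; funext i; simp only [sgl, Pi.smul_apply, smul_eq_mul]
      split <;> ring
    intro φ
    refine ⟨c.sum (fun m T => Polynomial.C (φ T) * Polynomial.X ^ m), fun k => ?_⟩
    rw [← hsm k, hc k, map_finsuppSum]
    rw [Finsupp.sum, Finsupp.sum, Polynomial.eval_finset_sum]
    refine Finset.sum_congr rfl fun m _ => ?_
    rw [map_smul, smul_eq_mul, Polynomial.eval_mul, Polynomial.eval_C, Polynomial.eval_pow,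
      Polynomial.eval_X, mul_comm]
  have hSP_P : SP j (fun (s : Fin j → ℤ) (_ : ℤ) => D (iota n j s)) := by
    intro φ
    obtain ⟨P, hP⟩ := IH φ
    exact ⟨Polynomial.C P, fun s k => by rw [hP, EV_C]⟩
  have hSP_q : SP j (fun (_ : Fin j → ℤ) (k : ℤ) => D (sgl jn k)) := by
    intro φ
    obtain ⟨p, hp⟩ := hq φ
    refine ⟨p.map (MvPolynomial.C : ℂ →+* A j), fun s k => ?_⟩
    rw [hp]
    show _ = EV s k _
    rw [EV, RingHom.comp_apply, Polynomial.coe_mapRingHom, Polynomial.map_map]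
    have hcomp : (evZ s).comp (MvPolynomial.C : ℂ →+* A j) = RingHom.id ℂ :=
      RingHom.ext fun a => by simp [evZ]
    rw [hcomp, Polynomial.map_id]
    rfl
  have hw1 : ∀ (s : Fin j → ℤ) (k : ℤ), muv μ (iota n j s) = EV s k (Polynomial.C Lp) := by
    intro s k; rw [EV_C, hLps]
  have hw2 : ∀ (s : Fin j → ℤ) (k : ℤ),
      μ jn * (k : ℂ) = EV s k (Polynomial.C (MvPolynomial.C (μ jn)) * Polynomial.X) := by
    intro s k
    rw [map_mul, EV_C, EV_X]
    simp [evZ]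
  have hSP_N : SP j (fun s k =>
      ((D (sgl jn k) * D (iota n j s) - D (iota n j s) * D (sgl jn k)) +
        (muv μ (iota n j s) • D (iota n j s) - (μ jn * (k : ℂ)) • D (sgl jn k)))) :=
    SP.add (SP.sub (SP.mul hSP_q hSP_P) (SP.mul hSP_P hSP_q))
      (SP.sub (SP.smul hw1 hSP_P) (SP.smul hw2 hSP_q))
  intro φ
  obtain ⟨Nφ, hNφ⟩ := hSP_N φ
  set ψ : Module.End ℂ U →ₗ[ℂ] ℂ :=
    φ ∘ₗ (LinearMap.mulLeft ℂ (D (sgl jn 1)) - LinearMap.mulRight ℂ (D (sgl jn 1))) with hψdef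
  obtain ⟨Nψ, hNψ⟩ := hSP_N ψ
  -- star relation, version 1
  have hS1 : ∀ (s : Fin j → ℤ) (k : ℤ), (muv μ (iota n j s) - μ jn * (k : ℂ)) • D (iota n j s + sgl jn k) =
      ((D (sgl jn k) * D (iota n j s) - D (iota n j s) * D (sgl jn k)) +
        (muv μ (iota n j s) • D (iota n j s) - (μ jn * (k : ℂ)) • D (sgl jn k))) := by
    intro s k
    have h := hstar (iota n j s) (sgl jn k)
    rwa [muv_sgl] at h
  have I1 : ∀ (s : Fin j → ℤ) (k : ℤ),
      (evZ s Lp - μ jn * (k : ℂ)) * φ (D (iota n j s + sgl jn k)) = EV s k Nφ := by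
    intro s k
    have h := congrArg φ (hS1 s k)
    rw [map_smul, smul_eq_mul] at h
    rw [hLps, h, hNφ]
  have I1ψ : ∀ (s : Fin j → ℤ) (k : ℤ),
      (evZ s Lp - μ jn * (k : ℂ)) * ψ (D (iota n j s + sgl jn k)) = EV s k Nψ := by
    intro s k
    have h := congrArg ψ (hS1 s k)
    rw [map_smul, smul_eq_mul] at h
    rw [hLps, h, hNψ]
  -- star relation, shift version
  have I2 : ∀ (s : Fin j → ℤ) (k : ℤ),
      (evZ s Lp + μ jn * ((k : ℂ) - 2)) * φ (D (iota n j s + sgl jn k)) =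
        ψ (D (iota n j s + sgl jn (k-1))) + (evZ s Lp + μ jn * ((k : ℂ) - 1)) * φ (D (iota n j s + sgl jn (k-1)))
          - μ jn * φ (D (sgl jn 1)) := by
    intro s k
    have h := congrArg φ (hstar (iota n j s + sgl jn (k-1)) (sgl jn 1))
    rw [add_assoc, sgl_add_one, muv_add, muv_sgl, muv_sgl] at h
    rw [map_smul, map_add, map_sub, map_sub, map_smul, map_smul, smul_eq_mul, smul_eq_mul,
      smul_eq_mul] at h
    have hψval : ψ (D (iota n j s + sgl jn (k-1))) =
        φ (D (sgl jn 1) * D (iota n j s + sgl jn (k-1)))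
          - φ (D (iota n j s + sgl jn (k-1)) * D (sgl jn 1)) := by
      simp [hψdef, LinearMap.mulLeft_apply, LinearMap.mulRight_apply]
    rw [hψval, hLps]
    push_cast at h ⊢
    linear_combination h
  -- the big polynomial identity
  have hEq : (Polynomial.C Lp + Polynomial.C (MvPolynomial.C (μ jn)) * (Polynomial.X - 2)) *
        (Polynomial.C Lp - Polynomial.C (MvPolynomial.C (μ jn)) * (Polynomial.X - 1)) * Nφ =
      (Polynomial.C Lp - Polynomial.C (MvPolynomial.C (μ jn)) * Polynomial.X) *
        (Nψ.comp (Polynomial.X - 1) +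
          (Polynomial.C Lp + Polynomial.C (MvPolynomial.C (μ jn)) * (Polynomial.X - 1)) *
            (Nφ.comp (Polynomial.X - 1)) -
          Polynomial.C (MvPolynomial.C (μ jn * φ (D (sgl jn 1)))) *
            (Polynomial.C Lp - Polynomial.C (MvPolynomial.C (μ jn)) * (Polynomial.X - 1))) := by
    refine sub_eq_zero.mp (pol_zero _ (fun s k => ?_))
    rw [map_sub, sub_eq_zero]
    simp only [map_mul, map_add, map_sub, EV_C, EV_X, EV_comp_X_sub_one, map_ofNat, map_one]
    have hevCC : ∀ a : ℂ, evZ s (MvPolynomial.C a) = a := fun a => by simp [evZ]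
    simp only [hevCC]
    have e1 := I1 s k
    have e2 := I1 s (k-1)
    have e3 := I1ψ s (k-1)
    have e4 := I2 s k
    push_cast at e1 e2 e3 e4 ⊢
    linear_combination (-((evZ s Lp + μ jn * ((k:ℂ) - 2)) * (evZ s Lp - μ jn * ((k:ℂ) - 1)))) * e1
      + ((evZ s Lp - μ jn * (k:ℂ)) * (evZ s Lp + μ jn * ((k:ℂ) - 1))) * e2
      + (evZ s Lp - μ jn * (k:ℂ)) * e3
      + ((evZ s Lp - μ jn * (k:ℂ)) * (evZ s Lp - μ jn * ((k:ℂ) - 1))) * e4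
  -- evaluate the identity at the root of the linear factor
  set r : A j := MvPolynomial.C (μ jn)⁻¹ * Lp with hrdef
  have hCbr : MvPolynomial.C (μ jn) * r = Lp := by
    rw [hrdef, ← mul_assoc, ← map_mul, mul_inv_cancel₀ hb, map_one, one_mul]
  have f1 : Polynomial.eval r (Polynomial.C Lp
      + Polynomial.C (MvPolynomial.C (μ jn)) * (Polynomial.X - 2))
      = 2 * Lp - 2 * MvPolynomial.C (μ jn) := by
    simp only [Polynomial.eval_add, Polynomial.eval_mul, Polynomial.eval_sub, Polynomial.eval_C,
      Polynomial.eval_X, Polynomial.eval_ofNat]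
    linear_combination hCbr
  have f2 : Polynomial.eval r (Polynomial.C Lp
      - Polynomial.C (MvPolynomial.C (μ jn)) * (Polynomial.X - 1))
      = MvPolynomial.C (μ jn) := by
    simp only [Polynomial.eval_sub, Polynomial.eval_mul, Polynomial.eval_C,
      Polynomial.eval_X, Polynomial.eval_one]
    linear_combination (-1 : A j) * hCbr
  have f3 : Polynomial.eval r (Polynomial.C Lp
      - Polynomial.C (MvPolynomial.C (μ jn)) * Polynomial.X) = 0 := by
    simp only [Polynomial.eval_sub, Polynomial.eval_mul, Polynomial.eval_C, Polynomial.eval_X]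
    linear_combination (-1 : A j) * hCbr
  have hccLp : MvPolynomial.constantCoeff Lp = 0 := by
    rw [hLpdef, map_sum]
    refine Finset.sum_eq_zero fun i _ => ?_
    simp
  have hzero : (2 * Lp - 2 * MvPolynomial.C (μ jn)) * MvPolynomial.C (μ jn)
      * (Polynomial.eval r Nφ) = 0 := by
    have h := congrArg (Polynomial.eval r) hEq
    simp only [Polynomial.eval_mul] at h
    rw [f1, f2, f3, zero_mul] at h
    exact h
  have hNe1 : (2 * Lp - 2 * MvPolynomial.C (μ jn)) ≠ 0 := by
    intro h0
    have h1 := congrArg MvPolynomial.constantCoeff h0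
    rw [map_sub, map_mul, map_mul, hccLp, MvPolynomial.constantCoeff_C, map_zero, map_ofNat] at h1
    exact hb (by linear_combination (-(1:ℂ)/2) * h1)
  have hNe2 : (MvPolynomial.C (μ jn) : A j) ≠ 0 := by
    simpa using hb
  have hRoot : Polynomial.eval r Nφ = 0 := by
    rcases mul_eq_zero.mp hzero with h | h
    · rcases mul_eq_zero.mp h with h' | h'
      · exact absurd h' hNe1
      · exact absurd h' hNe2
    · exact h
  obtain ⟨Q0, hQ0⟩ := Polynomial.dvd_iff_isRoot.mpr hRoot
  set Qf : Polynomial (A j) := Polynomial.C (MvPolynomial.C (-(μ jn)⁻¹)) * Q0 with hQfdef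
  have hFq : ∀ (s : Fin j → ℤ) (k : ℤ), ¬(s = 0 ∧ k = 0) →
      φ (D (iota n j s + sgl jn k)) = EV s k Qf := by
    intro s k hne
    have hvec : iota n j s + sgl jn (-k) ≠ 0 := by
      intro h0
      apply hne
      have hk : k = 0 := by
        have hk0 := congrFun h0 jn
        simp only [Pi.add_apply, Pi.zero_apply, iota, sgl, hjn] at hk0
        simp at hk0
        omega
      refine ⟨?_, hk⟩
      funext i
      have hi := congrFun h0 (Fin.castLE hj.le i)
      have hne : (Fin.castLE hj.le i) ≠ jn := by
        intro hc
        have := congrArg Fin.val hc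
        simp [hjn] at this
        omega
      simp only [Pi.add_apply, Pi.zero_apply, iota, sgl] at hi
      rw [if_neg hne] at hi
      rw [dif_pos (by simpa using i.isLt)] at hi
      simpa using hi
    have hsc : evZ s Lp - μ jn * (k:ℂ) ≠ 0 := by
      have hg := hgen _ hvec
      rw [muv_add, muv_sgl] at hg
      rw [hLps]
      intro h0
      apply hg
      push_cast
      linear_combination h0
    have e := I1 s k
    rw [hQ0, map_mul] at e
    have hXr : EV s k (Polynomial.X - Polynomial.C r) = (k:ℂ) - (μ jn)⁻¹ * evZ s Lp := by
      rw [map_sub, EV_X, EV_C, hrdef, map_mul]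
      simp [evZ]
    rw [hXr] at e
    rw [hQfdef, map_mul, EV_C]
    have hevC : evZ s (MvPolynomial.C (-(μ jn)⁻¹)) = -(μ jn)⁻¹ := by simp [evZ]
    rw [hevC]
    apply mul_left_cancel₀ hsc
    rw [e]
    field_simp
    ring
  have hAll : ∀ (s : Fin j → ℤ) (k : ℤ), φ (D (iota n j s + sgl jn k)) = EV s k Qf := by
    intro s k
    by_cases hc : s = 0 ∧ k = 0
    · obtain ⟨rfl, rfl⟩ := hc
      obtain ⟨p, hp⟩ := hq φ
      have hup : Qf.map (evZ (0 : Fin j → ℤ)) = p := by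
        apply eq_of_sub_eq_zero
        apply eq_zero_of_int_roots'
        intro x hx
        rw [Polynomial.eval_sub]
        have h1 : Polynomial.eval ((x:ℤ):ℂ) (Qf.map (evZ (0 : Fin j → ℤ))) = EV 0 x Qf := rfl
        rw [h1, ← hFq 0 x (by simp [hx]), iota_zero_fun, zero_add, hp x, sub_self]
      have h2 : EV (0 : Fin j → ℤ) 0 Qf = Polynomial.eval ((0:ℤ):ℂ) (Qf.map (evZ (0 : Fin j → ℤ))) := rfl
      rw [iota_zero_fun, zero_add, hp 0, h2, hup]
    · exact hFq s k hc
  -- lift to j+1 variables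
  refine ⟨Polynomial.eval₂ ((MvPolynomial.rename (Fin.castSucc : Fin j → Fin (j+1))).toRingHom)
      (MvPolynomial.X (Fin.last j)) Qf, fun s => ?_⟩
  rw [iota_succ n j hj s, hAll (fun i => s i.castSucc) (s (Fin.last j))]
  have hcomp : (evZ s).comp (MvPolynomial.rename (Fin.castSucc : Fin j → Fin (j+1))).toRingHom
      = evZ (fun i => s i.castSucc) := by
    refine RingHom.ext fun p => ?_
    simp only [RingHom.comp_apply, AlgHom.toRingHom_eq_coe, RingHom.coe_coe]
    rw [evZ, evZ, MvPolynomial.eval_rename]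
    rfl
  have hx : evZ s (MvPolynomial.X (Fin.last j)) = ((s (Fin.last j) : ℤ) : ℂ) := by simp [evZ]
  have h3 : evZ s (Polynomial.eval₂
      ((MvPolynomial.rename (Fin.castSucc : Fin j → Fin (j+1))).toRingHom)
      (MvPolynomial.X (Fin.last j)) Qf)
      = Polynomial.eval₂ (evZ (fun i => s i.castSucc)) ((s (Fin.last j) : ℤ) : ℂ) Qf := by
    rw [Polynomial.hom_eval₂, hcomp, hx]
  rw [h3, ← Polynomial.eval_map]
  rfl

end
end Stmt12


/-- Let `μ ∈ ℂⁿ` be generic, `U` finite-dimensional, and `D : ℤⁿ → End(U)` satisfy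
`[D(s),D(m)] = (μ·m)(D(m+s)−D(m)) − (μ·s)(D(m+s)−D(s))`, with `D(0) = β·Id`, such
that the restriction of `D` to every line `ℤ·m` is polynomial in the integer
parameter.  Then `D` agrees on all of `ℤⁿ` with an `End(U)`-valued polynomial in
`s = (s₁,…,sₙ)` whose constant term is `D(0)`. -/
theorem stmt12 (n : ℕ) (μ : Fin n → ℂ)
    (hgen : ∀ r : Fin n → ℤ, r ≠ 0 → (∑ i, μ i * (r i : ℂ)) ≠ 0)
    (U : Type) [AddCommGroup U] [Module ℂ U] [FiniteDimensional ℂ U]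
    (D : (Fin n → ℤ) → Module.End ℂ U) (β : ℂ)
    (hD0 : D 0 = β • (1 : Module.End ℂ U))
    (hrel : ∀ s m : Fin n → ℤ,
      D s * D m - D m * D s
        = (∑ i, μ i * (m i : ℂ)) • (D (m + s) - D m)
          - (∑ i, μ i * (s i : ℂ)) • (D (m + s) - D s))
    (hline : ∀ m : Fin n → ℤ, ∃ c : ℕ →₀ Module.End ℂ U,
      ∀ x : ℤ, D (x • m) = c.sum fun j T => (x : ℂ) ^ j • T) :
    ∃ c : (Fin n → ℕ) →₀ Module.End ℂ U,
      (∀ s : Fin n → ℤ, D s = c.sum fun k T => (∏ i, (s i : ℂ) ^ (k i)) • T) ∧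
      c 0 = D 0 := by
  classical
  have hgen' : ∀ r : Fin n → ℤ, r ≠ 0 → Stmt12.muv μ r ≠ 0 := hgen
  have hstar : ∀ m s : Fin n → ℤ, (Stmt12.muv μ m - Stmt12.muv μ s) • D (m + s) =
      (D s * D m - D m * D s) + (Stmt12.muv μ m • D m - Stmt12.muv μ s • D s) := by
    intro m s
    rw [hrel s m]
    module
  have key : ∀ j, j ≤ n → ∀ φ : Module.End ℂ U →ₗ[ℂ] ℂ, ∃ P : Stmt12.A j,
      ∀ s : Fin j → ℤ, φ (D (Stmt12.iota n j s)) = Stmt12.evZ s P := by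
    intro j
    induction j with
    | zero =>
      intro _ φ
      refine ⟨MvPolynomial.C (φ (D 0)), fun s => ?_⟩
      rw [show Stmt12.iota n 0 s = 0 from funext fun i => by simp [Stmt12.iota]]
      simp [Stmt12.evZ]
    | succ j ih =>
      intro hj1 φ
      exact Stmt12.step hgen' hstar hline (Nat.lt_of_succ_le hj1) (ih (Nat.le_of_succ_le hj1)) φ
  set bas := Module.finBasis ℂ (Module.End ℂ U) with hbas
  choose P hP using fun i => key n le_rfl (bas.coord i)
  set c : (Fin n → ℕ) →₀ Module.End ℂ U :=
    ∑ i, (P i).support.sum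
      (fun m => Finsupp.single (⇑m : Fin n → ℕ) ((P i).coeff m • bas i)) with hc
  have main : ∀ s : Fin n → ℤ, D s = c.sum fun k T => (∏ i, (s i : ℂ) ^ (k i)) • T := by
    intro s
    have hDs : D s = ∑ i, Stmt12.evZ s (P i) • bas i := by
      conv_lhs => rw [← bas.sum_repr (D s)]
      refine Finset.sum_congr rfl fun i _ => ?_
      congr 1
      have h1 := hP i s
      rw [Stmt12.iota_top] at h1
      rw [← h1]
      simp [Module.Basis.coord_apply]
    rw [hDs, hc]
    rw [← Finsupp.sum_finset_sum_index (fun a => smul_zero _) (fun a b1 b2 => smul_add _ b1 b2)]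
    refine Finset.sum_congr rfl fun i _ => ?_
    rw [← Finsupp.sum_finset_sum_index (fun a => smul_zero _) (fun a b1 b2 => smul_add _ b1 b2)]
    have hsingle : ∀ m ∈ (P i).support,
        (Finsupp.single (⇑m : Fin n → ℕ) ((P i).coeff m • bas i)).sum
          (fun k T => (∏ i', (s i' : ℂ) ^ (k i')) • T)
        = (∏ i', (s i' : ℂ) ^ (m i')) • ((P i).coeff m • bas i) := by
      intro m _
      exact Finsupp.sum_single_index (smul_zero _)
    rw [Finset.sum_congr rfl hsingle]
    have hev : Stmt12.evZ s (P i)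
        = ∑ m ∈ (P i).support, (P i).coeff m * ∏ i', ((s i' : ℤ) : ℂ) ^ (m i') :=
      MvPolynomial.eval_eq' _ _
    rw [hev, Finset.sum_smul]
    refine Finset.sum_congr rfl fun m _ => ?_
    rw [smul_smul, mul_comm]
  refine ⟨c, main, ?_⟩
  have h := main 0
  rw [Finsupp.sum] at h
  have hprod : ∀ k : Fin n → ℕ,
      (∏ i, (((0 : Fin n → ℤ) i : ℤ) : ℂ) ^ (k i)) = if k = 0 then 1 else 0 := by
    intro k
    by_cases hk : k = 0
    · subst hk; simp
    · rw [if_neg hk]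
      obtain ⟨i0, hi0⟩ : ∃ i0, k i0 ≠ 0 := by
        by_contra hall
        push_neg at hall
        exact hk (funext hall)
      exact Finset.prod_eq_zero (Finset.mem_univ i0) (by simp [zero_pow hi0])
  have h2 : D 0 = c 0 := by
    rw [h]
    have hcong : ∀ k ∈ c.support,
        (∏ i, (((0 : Fin n → ℤ) i : ℤ) : ℂ) ^ (k i)) • c k = if k = 0 then c k else 0 := by
      intro k _
      rw [hprod k]
      split <;> simp
    rw [Finset.sum_congr rfl hcong, Finset.sum_ite_eq' c.support 0 (fun k => c k)]
    split
    · rfl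
    · exact (Finsupp.notMem_support_iff.mp (by assumption)).symm
  exact h2.symm
end

section
/- The derived subalgebra of 𝓛₀ = span{xᵢ∂_μ : 1 ≤ i ≤ n} is the abelian subalgebra {Σᵢ cᵢxᵢ∂_μ : Σᵢ μᵢcᵢ = 0}; in particular the brackets [xᵢ∂_μ, xⱼ∂_μ] = μⱼxᵢ∂_μ − μᵢxⱼ∂_μ span exactly this hyperplane when μ ≠ 0. -/
open MvPolynomial

/-- The derivation `∂_μ = μ₁∂/∂x₁ + ⋯ + μₙ∂/∂xₙ` applied to a polynomial. -/
noncomputable def dmu (n : ℕ) (μ : Fin n → ℂ) (g : MvPolynomial (Fin n) ℂ) :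
    MvPolynomial (Fin n) ℂ :=
  ∑ i, C (μ i) * pderiv i g

/-- The Lie bracket of `𝓛 = ℂ[x₁,…,xₙ]∂_μ`, identified with `ℂ[x₁,…,xₙ]` via
`f ↔ f∂_μ`. -/
noncomputable def lbr (n : ℕ) (μ : Fin n → ℂ) (f g : MvPolynomial (Fin n) ℂ) :
    MvPolynomial (Fin n) ℂ :=
  f * dmu n μ g - g * dmu n μ f

/-- `𝓛₀ = span{xᵢ∂_μ}`, identified with the span of the variables `xᵢ`. -/
noncomputable def lzero (n : ℕ) : Submodule ℂ (MvPolynomial (Fin n) ℂ) :=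
  Submodule.span ℂ (Set.range (X : Fin n → MvPolynomial (Fin n) ℂ))

lemma dmu_X (n : ℕ) (μ : Fin n → ℂ) (j : Fin n) :
    dmu n μ (X j) = C (μ j) := by
  simp [dmu, pderiv_X, Pi.single_apply]

lemma dmu_add (n : ℕ) (μ : Fin n → ℂ) (f g : MvPolynomial (Fin n) ℂ) :
    dmu n μ (f + g) = dmu n μ f + dmu n μ g := by
  simp [dmu, mul_add, Finset.sum_add_distrib]

lemma dmu_smul (n : ℕ) (μ : Fin n → ℂ) (c : ℂ) (f : MvPolynomial (Fin n) ℂ) :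
    dmu n μ (c • f) = c • dmu n μ f := by
  simp [dmu, Finset.smul_sum, mul_smul_comm]

lemma coeff_single_X' (n : ℕ) (i j : Fin n) :
    coeff (Finsupp.single i 1) (X j : MvPolynomial (Fin n) ℂ) = if i = j then 1 else 0 := by
  simp [coeff_X', Finsupp.single_left_inj, eq_comm]

lemma dmu_of_mem (n : ℕ) (μ : Fin n → ℂ) {f : MvPolynomial (Fin n) ℂ} (hf : f ∈ lzero n) :
    dmu n μ f = C (∑ i, μ i * coeff (Finsupp.single i 1) f) := by
  induction hf using Submodule.span_induction with
  | mem x hx =>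
    obtain ⟨j, rfl⟩ := hx
    simp [dmu_X, coeff_single_X', mul_ite]
  | zero => simp [dmu]
  | add x y _ _ hx hy =>
    rw [dmu_add, hx, hy, ← map_add]
    congr 1
    rw [← Finset.sum_add_distrib]
    exact Finset.sum_congr rfl fun i _ => by rw [coeff_add]; ring
  | smul c x _ hx =>
    rw [dmu_smul, hx, smul_eq_C_mul, ← map_mul]
    congr 1
    rw [Finset.mul_sum]
    exact Finset.sum_congr rfl fun i _ => by rw [coeff_smul, smul_eq_mul]; ring

lemma eq_sum_of_mem (n : ℕ) {f : MvPolynomial (Fin n) ℂ} (hf : f ∈ lzero n) :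
    f = ∑ i, C (coeff (Finsupp.single i 1) f) * X i := by
  induction hf using Submodule.span_induction with
  | mem x hx =>
    obtain ⟨j, rfl⟩ := hx
    simp [coeff_single_X', apply_ite C, ite_mul]
  | zero => simp
  | add x y _ _ hx hy =>
    calc x + y = (∑ i, C (coeff (Finsupp.single i 1) x) * X i) +
        ∑ i, C (coeff (Finsupp.single i 1) y) * X i := by rw [← hx, ← hy]
    _ = ∑ i, C (coeff (Finsupp.single i 1) (x + y)) * X i := by
        rw [← Finset.sum_add_distrib]
        exact Finset.sum_congr rfl fun i _ => by rw [coeff_add, map_add, add_mul]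
  | smul c x _ hx =>
    calc c • x = C c * ∑ i, C (coeff (Finsupp.single i 1) x) * X i := by
          rw [← hx, smul_eq_C_mul]
    _ = ∑ i, C (coeff (Finsupp.single i 1) (c • x)) * X i := by
        rw [Finset.mul_sum]
        exact Finset.sum_congr rfl fun i _ => by
          rw [coeff_smul, smul_eq_mul, map_mul]; ring

/-- For `μ ≠ 0`, the derived subalgebra of `𝓛₀ = span{xᵢ∂_μ}` is the abelian
hyperplane `{Σᵢ cᵢxᵢ∂_μ : Σᵢ μᵢcᵢ = 0}`: the brackets
`[xᵢ∂_μ, xⱼ∂_μ] = μⱼxᵢ∂_μ − μᵢxⱼ∂_μ` span exactly this subspace, and it is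
abelian. -/
theorem stmt14 (n : ℕ) (μ : Fin n → ℂ) (hμ : μ ≠ 0) :
    (∀ i j : Fin n, lbr n μ (X i) (X j) = C (μ j) * X i - C (μ i) * X j) ∧
    (∀ f : MvPolynomial (Fin n) ℂ,
      f ∈ Submodule.span ℂ {h | ∃ i j : Fin n, h = lbr n μ (X i) (X j)} ↔
        (f ∈ lzero n ∧ ∑ i, μ i * coeff (Finsupp.single i 1) f = 0)) ∧
    (∀ f g : MvPolynomial (Fin n) ℂ,
      f ∈ lzero n → ∑ i, μ i * coeff (Finsupp.single i 1) f = 0 →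
      g ∈ lzero n → ∑ i, μ i * coeff (Finsupp.single i 1) g = 0 →
      lbr n μ f g = 0) := by
  have hbr : ∀ i j : Fin n, lbr n μ (X i) (X j) = C (μ j) * X i - C (μ i) * X j := by
    intro i j
    rw [lbr, dmu_X, dmu_X]
    ring
  refine ⟨hbr, ?_, ?_⟩
  · intro f
    constructor
    · intro hf
      induction hf using Submodule.span_induction with
      | mem x hx =>
        obtain ⟨i, j, rfl⟩ := hx
        rw [hbr]
        constructor
        · exact sub_mem
            (by rw [← smul_eq_C_mul]
                exact Submodule.smul_mem _ _ (Submodule.subset_span ⟨i, rfl⟩))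
            (by rw [← smul_eq_C_mul]
                exact Submodule.smul_mem _ _ (Submodule.subset_span ⟨j, rfl⟩))
        · simp only [coeff_sub, coeff_C_mul, coeff_single_X', mul_ite, mul_one, mul_zero,
            mul_sub, Finset.sum_sub_distrib, Finset.sum_ite_eq', Finset.mem_univ, if_true]
          ring
      | zero => simp
      | add x y _ _ hx hy =>
        exact ⟨add_mem hx.1 hy.1, by
          simp only [coeff_add, mul_add, Finset.sum_add_distrib, hx.2, hy.2, add_zero]⟩
      | smul c x _ hx =>
        refine ⟨Submodule.smul_mem _ _ hx.1, ?_⟩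
        have : ∑ i, μ i * coeff (Finsupp.single i 1) (c • x)
            = c * ∑ i, μ i * coeff (Finsupp.single i 1) x := by
          rw [Finset.mul_sum]
          exact Finset.sum_congr rfl fun i _ => by rw [coeff_smul, smul_eq_mul]; ring
        rw [this, hx.2, mul_zero]
    · rintro ⟨hf, hs⟩
      obtain ⟨k, hk⟩ := Function.ne_iff.mp hμ
      have hk : μ k ≠ 0 := hk
      have hrep : f = ∑ i, (coeff (Finsupp.single i 1) f / μ k) • lbr n μ (X i) (X k) := by
        conv_lhs => rw [eq_sum_of_mem n hf]
        have h2 : ∀ i : Fin n, (coeff (Finsupp.single i 1) f / μ k) • lbr n μ (X i) (X k)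
            = C (coeff (Finsupp.single i 1) f) * X i
              - C (coeff (Finsupp.single i 1) f / μ k * μ i) * X k := by
          intro i
          rw [hbr, smul_sub, smul_eq_C_mul, smul_eq_C_mul, ← mul_assoc, ← map_mul,
            div_mul_cancel₀ _ hk, ← mul_assoc, ← map_mul]
        rw [Finset.sum_congr rfl fun i _ => h2 i, Finset.sum_sub_distrib,
          ← Finset.sum_mul, ← map_sum]
        have h3 : ∑ i, coeff (Finsupp.single i 1) f / μ k * μ i = 0 := by
          have : ∑ i, coeff (Finsupp.single i 1) f / μ k * μ i
              = (∑ i, μ i * coeff (Finsupp.single i 1) f) * (μ k)⁻¹ := by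
            rw [Finset.sum_mul]
            exact Finset.sum_congr rfl fun i _ => by field_simp
          rw [this, hs, zero_mul]
        rw [h3, map_zero, zero_mul, sub_zero]
      rw [hrep]
      exact Submodule.sum_smul_mem _ _ fun i _ => Submodule.subset_span ⟨i, k, rfl⟩
  · intro f g hf hfs hg hgs
    rw [lbr, dmu_of_mem n μ hf, dmu_of_mem n μ hg, hfs, hgs, map_zero, mul_zero, mul_zero,
      sub_zero]
end

section
/- Every finite-dimensional representation ρ of 𝓛₊ satisfies ρ(x^k∂_μ) = 0 for all k with k₁ + ... + kₙ sufficiently large; equivalently, ρ factors through the finite-dimensional solvable quotient 𝓛₊ / ⊕_{j≥p} 𝓛_j for some p. -/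
open MvPolynomial

lemma lbr_X_monomial (n : ℕ) (μ : Fin n → ℂ) (j : Fin n) (m : Fin n →₀ ℕ) :
    lbr n μ (X j) (monomial m 1) =
      C (μ j * ((m j : ℂ) - 1)) * monomial m 1 +
      ∑ i ∈ Finset.univ.erase j,
        C (μ i * (m i : ℂ)) * monomial (m - Finsupp.single i 1 + Finsupp.single j 1) 1 := by
  rw [lbr, dmu_X, dmu]
  rw [Finset.mul_sum, ← Finset.add_sum_erase (a := j) _ _ (Finset.mem_univ j)]
  have hdiag : X j * (C (μ j) * pderiv j ((monomial m) 1)) - monomial m 1 * C (μ j)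
      = C (μ j * ((m j : ℂ) - 1)) * monomial m 1 := by
    rw [pderiv_monomial, one_mul]
    rcases Nat.eq_zero_or_pos (m j) with h0 | hpos
    · rw [h0]
      simp only [Nat.cast_zero, monomial_zero', map_zero]
      rw [mul_zero, mul_zero, zero_sub, mul_comm ((monomial m) 1), ← neg_mul]
      rw [← C_neg]
      ring_nf
    · have hm : Finsupp.single j 1 + (m - Finsupp.single j 1) = m := by
        ext a
        simp only [Finsupp.add_apply, Finsupp.tsub_apply, Finsupp.single_apply]
        rcases eq_or_ne j a with rfl | hja
        · simp; omega
        · simp [hja]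
      calc X j * (C (μ j) * monomial (m - Finsupp.single j 1) ((m j : ℂ))) - monomial m 1 * C (μ j)
          = C (μ j) * (X j * monomial (m - Finsupp.single j 1) ((m j : ℂ))) - C (μ j) * monomial m 1 := by ring
        _ = C (μ j) * monomial m ((m j : ℂ)) - C (μ j) * monomial m 1 := by
            rw [X, monomial_mul, one_mul, hm]
        _ = monomial m (μ j * (m j : ℂ)) - monomial m (μ j * 1) := by rw [C_mul_monomial, C_mul_monomial]
        _ = monomial m (μ j * ((m j : ℂ) - 1)) := by rw [← map_sub]; ring_nf
        _ = _ := by rw [C_mul_monomial, mul_one]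
  rw [add_sub_right_comm, hdiag]
  congr 1
  refine Finset.sum_congr rfl fun i hi => ?_
  rw [pderiv_monomial, one_mul]
  calc X j * (C (μ i) * monomial (m - Finsupp.single i 1) ((m i : ℂ)))
      = C (μ i) * (monomial (Finsupp.single j 1) 1 * monomial (m - Finsupp.single i 1) ((m i : ℂ))) := by
        rw [X]; ring
    _ = C (μ i) * monomial ((m - Finsupp.single i 1) + Finsupp.single j 1) ((m i : ℂ)) := by
        rw [monomial_mul, one_mul, add_comm]
    _ = _ := by rw [C_mul_monomial, C_mul_monomial, mul_one]

lemma single_eval_sum (n : ℕ) (k : Fin n → ℕ) (j : Fin n) :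
    (∑ i, Finsupp.single i (k i)) j = k j := by
  classical
  rw [Finsupp.finset_sum_apply]
  rw [Finset.sum_eq_single j]
  · simp
  · intro i _ hij; simp [Finsupp.single_apply, hij]
  · simp

lemma shift_apply (n : ℕ) (m : Fin n →₀ ℕ) (i j : Fin n) (hij : i ≠ j) :
    ((m - Finsupp.single i 1 + Finsupp.single j 1 : Fin n →₀ ℕ)) j = m j + 1 := by
  simp [Finsupp.add_apply, Finsupp.tsub_apply, Finsupp.single_apply, hij]

lemma shift_sum (n : ℕ) (m : Fin n →₀ ℕ) (i j : Fin n) (hij : i ≠ j) (hmi : 1 ≤ m i) :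
    ∑ a, ((m - Finsupp.single i 1 + Finsupp.single j 1 : Fin n →₀ ℕ)) a = ∑ a, m a := by
  have h1 : ∀ a, ((m - Finsupp.single i 1 + Finsupp.single j 1 : Fin n →₀ ℕ)) a
      = (m a - (Finsupp.single i 1) a) + (Finsupp.single j 1) a := by
    intro a; simp [Finsupp.add_apply, Finsupp.tsub_apply]
  have h2 : ∀ a, (m a - (Finsupp.single i 1) a) + (Finsupp.single i 1) a = m a := by
    intro a
    rcases eq_or_ne i a with rfl | hia
    · simp; omega
    · simp [Finsupp.single_apply, hia]
  have hsing : ∀ b : Fin n, ∑ a, (Finsupp.single b 1 : Fin n →₀ ℕ) a = 1 := by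
    intro b
    rw [Finset.sum_eq_single b]
    · simp
    · intro i _ hib; exact Finsupp.single_eq_of_ne' (Ne.symm hib)
    · simp
  calc ∑ a, ((m - Finsupp.single i 1 + Finsupp.single j 1 : Fin n →₀ ℕ)) a
      = (∑ a, (m a - (Finsupp.single i 1) a)) + ∑ a, (Finsupp.single j 1 : Fin n →₀ ℕ) a := by
        rw [← Finset.sum_add_distrib]; exact Finset.sum_congr rfl fun a _ => h1 a
    _ = ∑ a, m a := by
        have h3 : (∑ a, (m a - (Finsupp.single i 1 : Fin n →₀ ℕ) a)) + ∑ a, (Finsupp.single i 1 : Fin n →₀ ℕ) a = ∑ a, m a := by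
          rw [← Finset.sum_add_distrib]
          exact Finset.sum_congr rfl fun a _ => h2 a
        rw [hsing i] at h3
        rw [hsing j]
        omega

/-- Every finite-dimensional representation `ρ` of `𝓛₊` satisfies
`ρ(x^k∂_μ) = 0` for all `k` with `k₁ + ⋯ + kₙ` sufficiently large (hence it
factors through a finite-dimensional solvable quotient of `𝓛₊`). -/
theorem stmt16 (n : ℕ) (μ : Fin n → ℂ)
    (hgen : ∀ r : Fin n → ℤ, r ≠ 0 → (∑ i, μ i * (r i : ℂ)) ≠ 0)
    (U : Type) [AddCommGroup U] [Module ℂ U] [FiniteDimensional ℂ U]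
    (ρ : MvPolynomial (Fin n) ℂ →ₗ[ℂ] Module.End ℂ U)
    (hbr : ∀ f g : MvPolynomial (Fin n) ℂ, constantCoeff f = 0 → constantCoeff g = 0 →
      ρ (lbr n μ f g) = ρ f * ρ g - ρ g * ρ f) :
    ∃ N : ℕ, ∀ k : Fin n → ℕ, N ≤ ∑ i, k i →
      ρ (monomial (∑ i, Finsupp.single i (k i)) (1 : ℂ)) = 0 := by
  classical
  -- μ j ≠ 0
  have hmu : ∀ j, μ j ≠ 0 := by
    intro j
    have h := hgen ((Pi.single j 1 : Fin n → ℤ)) (by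
      intro h; have := congrFun h j; simp at this)
    have hsum : (∑ i, μ i * (((Pi.single j 1 : Fin n → ℤ) i : ℤ) : ℂ)) = μ j := by
      rw [Finset.sum_eq_single j]
      · simp
      · intro i _ hij; simp [Pi.single_eq_of_ne hij]
      · simp
    rw [hsum] at h; exact h
  -- the adjoint operators
  set A : Fin n → Module.End ℂ (Module.End ℂ U) :=
    fun j => LinearMap.mulLeft ℂ (ρ (X j)) - LinearMap.mulRight ℂ (ρ (X j)) with hA
  -- choose bounds M j
  have hMex : ∀ j : Fin n, ∃ M : ℕ, 1 ≤ M ∧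
      ∀ c : ℕ, M ≤ c → ¬ (A j).HasEigenvalue (μ j * ((c : ℂ) - 1)) := by
    intro j
    have hfin : Set.Finite {c : ℕ | (A j).HasEigenvalue (μ j * ((c : ℂ) - 1))} := by
      have hE : Set.Finite (Module.End.HasEigenvalue (A j)) :=
        Module.End.finite_hasEigenvalue (A j)
      have hinj : Set.InjOn (fun c : ℕ => μ j * ((c : ℂ) - 1))
          ((fun c : ℕ => μ j * ((c : ℂ) - 1)) ⁻¹' (Module.End.HasEigenvalue (A j))) :=
        Set.injOn_of_injective (fun a b hab => by
          have : ((a : ℂ) - 1) = ((b : ℂ) - 1) := mul_left_cancel₀ (hmu j) hab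
          exact_mod_cast Nat.cast_injective (sub_left_injective this))
      exact Set.Finite.preimage hinj hE
    obtain ⟨B, hB⟩ := hfin.bddAbove
    refine ⟨B + 1, le_add_self, fun c hc hev => ?_⟩
    have := hB (Set.mem_setOf.mpr hev)
    omega
  choose M hM1 hM using hMex
  -- one step of the eigen argument
  have finish : ∀ (j : Fin n) (m : Fin n →₀ ℕ), M j ≤ m j →
      (∀ i, i ≠ j → m i ≠ 0 →
        ρ (monomial (m - Finsupp.single i 1 + Finsupp.single j 1) 1) = 0) →
      ρ (monomial m 1) = 0 := by
    intro j m hMm hside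
    have hmj1 : 1 ≤ m j := le_trans (hM1 j) hMm
    have hm0 : m ≠ 0 := by
      intro h; rw [h] at hmj1; simp at hmj1
    have hcc : constantCoeff (monomial m (1:ℂ)) = 0 := by
      rw [constantCoeff_monomial]; simp [hm0]
    have hbrx := hbr (X j) (monomial m 1) (constantCoeff_X (R := ℂ) j) hcc
    have hlbr : ρ (lbr n μ (X j) (monomial m 1))
        = (μ j * ((m j : ℂ) - 1)) • ρ (monomial m 1) := by
      rw [lbr_X_monomial, map_add, ← smul_eq_C_mul, map_smul]
      have hz : ρ (∑ i ∈ Finset.univ.erase j,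
          C (μ i * (m i : ℂ)) * monomial (m - Finsupp.single i 1 + Finsupp.single j 1) 1) = 0 := by
        rw [map_sum]
        refine Finset.sum_eq_zero fun i hi => ?_
        have hij : i ≠ j := Finset.ne_of_mem_erase hi
        rw [← smul_eq_C_mul, map_smul]
        rcases eq_or_ne (m i) 0 with h0 | h0
        · rw [h0]; simp
        · rw [hside i hij h0, smul_zero]
      rw [hz, add_zero]
    have heig : (A j) (ρ (monomial m 1)) = (μ j * ((m j : ℂ) - 1)) • ρ (monomial m 1) := by
      rw [hA]
      simp only [LinearMap.sub_apply, LinearMap.mulLeft_apply, LinearMap.mulRight_apply]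
      rw [← hbrx, hlbr]
    by_contra hv
    exact hM j (m j) hMm (Module.End.hasEigenvalue_of_hasEigenvector
      ⟨Module.End.mem_eigenspace_iff.mpr heig, hv⟩)
  -- the induction
  have main : ∀ (t : ℕ) (j : Fin n) (m : Fin n →₀ ℕ), M j ≤ m j →
      (∑ i, m i) - m j ≤ t → ρ (monomial m 1) = 0 := by
    intro t
    induction t with
    | zero =>
      intro j m hMm hdeg
      refine finish j m hMm fun i hij hmi => ?_
      exfalso
      have hsub : ({i, j} : Finset (Fin n)) ⊆ Finset.univ := Finset.subset_univ _
      have hle : m i + m j ≤ ∑ a, m a := by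
        have := Finset.sum_le_sum_of_subset (f := fun a => m a) hsub
        rwa [Finset.sum_pair hij] at this
      omega
    | succ t ih =>
      intro j m hMm hdeg
      refine finish j m hMm fun i hij hmi => ?_
      refine ih j _ ?_ ?_
      · rw [shift_apply n m i j hij]; omega
      · rw [shift_sum n m i j hij (Nat.one_le_iff_ne_zero.mpr hmi),
          shift_apply n m i j hij]
        omega
  -- conclude
  refine ⟨1 + ∑ j, M j, fun k hk => ?_⟩
  have hex : ∃ j, M j ≤ k j := by
    by_contra hno
    push_neg at hno
    have : ∑ j, (k j + 1) ≤ ∑ j, M j :=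
      Finset.sum_le_sum fun j _ => hno j
    rw [Finset.sum_add_distrib] at this
    simp at this
    omega
  obtain ⟨j, hj⟩ := hex
  set m : Fin n →₀ ℕ := ∑ i, Finsupp.single i (k i) with hm
  have hmk : ∀ a, m a = k a := fun a => single_eval_sum n k a
  refine main ((∑ i, m i) - m j) j m ?_ le_rfl
  rw [hmk j]; exact hj
end

section
/- In the universal enveloping algebra U(W_μ), the differentiators Ω^{(r,h)}_{k,s} = Σ_{i=0}^{r} (−1)^i C(r,i) e_{k−ih} e_{s+ih} satisfy, for r ≥ 2 and k,s,p,q,h ∈ Γ_μ: Σ_{i=0}^{r} Σ_{j=0}^{r} (−1)^{i+j} C(r,i)C(r,j) ({Ω^{(r,h)}_{k−ih,s−jh}, Ω^{(r,h)}_{q+ih,p+jh}} − {Ω^{(r,h)}_{k−ih,q−jh}, Ω^{(r,h)}_{s+ih,p+jh}}) = (q−s)(p−k+2rh) Ω^{(4r,h)}_{k+p+2rh, s+q−2rh}, where {X,Y} = XY + YX. -/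
/-- The differentiator `Ω^{(r,h)}_{k,s} = Σ_{i=0}^{r} (−1)^i C(r,i) e_{k−ih} e_{s+ih}`,
formed in any associative `ℂ`-algebra `R` containing elements `e_k`, `k ∈ Γ_μ`,
satisfying the commutation relations of `W_μ` (e.g. `R = U(W_μ)` with its
canonical generators). -/
noncomputable def diffr (Γ : AddSubgroup ℂ) (R : Type) [Ring R] [Algebra ℂ R]
    (e : Γ → R) (r : ℕ) (h k s : Γ) : R :=
  ∑ i ∈ Finset.range (r + 1),
    ((-1 : ℂ) ^ i * (r.choose i : ℂ)) • (e (k - i • h) * e (s + i • h))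

set_option linter.unusedSectionVars false
open Finset

section Infra
variable {M : Type*} [AddCommMonoid M]
/-- quadruple sum over a box -/
def S4 (N : ℕ) (F : ℕ → ℕ → ℕ → ℕ → M) : M :=
  ∑ i ∈ range N, ∑ j ∈ range N, ∑ m ∈ range N, ∑ n ∈ range N, F i j m n

theorem S4_congr {N : ℕ} {F G : ℕ → ℕ → ℕ → ℕ → M}
    (hFG : ∀ i j m n, i < N → j < N → m < N → n < N → F i j m n = G i j m n) :
    S4 N F = S4 N G := by
  unfold S4
  refine sum_congr rfl fun i hi => sum_congr rfl fun j hj => sum_congr rfl fun m hm =>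
    sum_congr rfl fun n hn => ?_
  exact hFG i j m n (mem_range.1 hi) (mem_range.1 hj) (mem_range.1 hm) (mem_range.1 hn)

theorem S4_add {N : ℕ} (F G : ℕ → ℕ → ℕ → ℕ → M) :
    S4 N (fun i j m n => F i j m n + G i j m n) = S4 N F + S4 N G := by
  simp [S4, Finset.sum_add_distrib]

theorem S4_sw1 {N : ℕ} (F : ℕ → ℕ → ℕ → ℕ → M) :
    S4 N F = S4 N (fun i j m n => F j i m n) := by
  unfold S4; exact Finset.sum_comm

theorem S4_sw3 {N : ℕ} (F : ℕ → ℕ → ℕ → ℕ → M) :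
    S4 N F = S4 N (fun i j m n => F i j n m) := by
  unfold S4
  exact sum_congr rfl fun i _ => sum_congr rfl fun j _ => Finset.sum_comm

theorem S4_pairs {N : ℕ} (F : ℕ → ℕ → ℕ → ℕ → M) :
    S4 N F = S4 N (fun i j m n => F m n i j) := by
  have key : ∀ G : ℕ → ℕ → ℕ → ℕ → M, S4 N G =
      ∑ x ∈ range N ×ˢ range N, ∑ y ∈ range N ×ˢ range N, G x.1 x.2 y.1 y.2 := by
    intro G
    simp [S4, Finset.sum_product]
  rw [key, Finset.sum_comm, key]

theorem S4_rev {N : ℕ} (F : ℕ → ℕ → ℕ → ℕ → M) :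
    S4 N F = S4 N (fun i j m n => F n m j i) := by
  calc S4 N F = S4 N (fun i j m n => F j i m n) := S4_sw1 F
  _ = S4 N (fun i j m n => F j i n m) := S4_sw3 _
  _ = S4 N (fun i j m n => F n m j i) := S4_pairs _

theorem S4_reflect_all {r : ℕ} (F : ℕ → ℕ → ℕ → ℕ → M) :
    S4 (r+1) F = S4 (r+1) (fun i j m n => F (r-i) (r-j) (r-m) (r-n)) := by
  unfold S4
  conv_lhs => rw [← Finset.sum_range_reflect]
  refine sum_congr rfl fun i _ => ?_
  conv_lhs => rw [← Finset.sum_range_reflect]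
  refine sum_congr rfl fun j _ => ?_
  conv_lhs => rw [← Finset.sum_range_reflect]
  refine sum_congr rfl fun m _ => ?_
  conv_lhs => rw [← Finset.sum_range_reflect]
  simp

theorem S4_rho {r : ℕ} (F : ℕ → ℕ → ℕ → ℕ → M) :
    S4 (r+1) F = S4 (r+1) (fun i j m n => F (r-j) (r-i) (r-n) (r-m)) := by
  calc S4 (r+1) F = S4 (r+1) (fun i j m n => F j i m n) := S4_sw1 F
  _ = S4 (r+1) (fun i j m n => F j i n m) := S4_sw3 _
  _ = S4 (r+1) (fun i j m n => F (r-j) (r-i) (r-n) (r-m)) := S4_reflect_all _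

theorem S4_reflect24 {r : ℕ} (F : ℕ → ℕ → ℕ → ℕ → M) :
    S4 (r+1) F = S4 (r+1) (fun i j m n => F i (r-j) m (r-n)) := by
  unfold S4
  refine sum_congr rfl fun i _ => ?_
  conv_lhs => rw [← Finset.sum_range_reflect]
  refine sum_congr rfl fun j _ => ?_
  refine sum_congr rfl fun m _ => ?_
  conv_lhs => rw [← Finset.sum_range_reflect]
  simp

end Infra

section Infra2
variable {M : Type*} [AddCommGroup M] [Module ℂ M]

-- alternating sum lemmas
theorem alt_sum_choose {r : ℕ} (hr : 1 ≤ r) :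
    ∑ x ∈ range (r+1), (-1 : ℂ)^x * (r.choose x : ℂ) = 0 := by
  have := Int.alternating_sum_range_choose_of_ne (n := r) (by omega)
  have := congrArg (fun z : ℤ => (z : ℂ)) this
  push_cast at this
  simpa using this

theorem alt_sum_choose_mul {r : ℕ} (hr : 2 ≤ r) :
    ∑ x ∈ range (r+1), (-1 : ℂ)^x * (r.choose x : ℂ) * (x : ℂ) = 0 := by
  have hstep : ∀ y : ℕ, (-1:ℂ)^(y+1) * (r.choose (y+1) : ℂ) * (((y+1 : ℕ)) : ℂ)
      = (-(r:ℂ)) * ((-1:ℂ)^y * ((r-1).choose y : ℂ)) := by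
    intro y
    have h1 : r - 1 + 1 = r := by omega
    have h2 := Nat.add_one_mul_choose_eq (r-1) y
    rw [h1] at h2
    have h3 := congrArg (fun z : ℕ => (z : ℂ)) h2
    push_cast at h3
    push_cast
    rw [pow_succ]
    linear_combination ((-1:ℂ)^y) * h3
  rw [Finset.sum_range_succ']
  rw [Finset.sum_congr rfl (fun y _ => hstep y)]
  rw [← Finset.mul_sum]
  have h2 : r - 1 + 1 = r := by omega
  rw [show range r = range ((r-1)+1) by rw [h2]]
  rw [alt_sum_choose (by omega)]
  simp

theorem alt_sum_affine {r : ℕ} (hr : 2 ≤ r) (a b : ℂ) :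
    ∑ x ∈ range (r+1), (-1 : ℂ)^x * (r.choose x : ℂ) * (a + (x:ℂ) * b) = 0 := by
  have h1 := alt_sum_choose (r := r) (by omega)
  have h2 := alt_sum_choose_mul hr
  calc ∑ x ∈ range (r+1), (-1 : ℂ)^x * (r.choose x : ℂ) * (a + (x:ℂ) * b)
      = (∑ x ∈ range (r+1), (-1 : ℂ)^x * (r.choose x : ℂ)) * a
        + (∑ x ∈ range (r+1), (-1 : ℂ)^x * (r.choose x : ℂ) * (x:ℂ)) * b := by
        rw [Finset.sum_mul, Finset.sum_mul, ← Finset.sum_add_distrib]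
        exact sum_congr rfl fun x _ => by ring
    _ = 0 := by rw [h1, h2]; ring

end Infra2

section Infra3
variable {M : Type*} [AddCommGroup M] [Module ℂ M]

/-- Vanishing of quadruple alternating sums when the last index appears only
affinely in the scalar and not in the module part. -/
theorem S4_vanish4 {r : ℕ} (hr : 2 ≤ r) (α : ℕ → ℕ → ℕ → ℂ) (b : ℂ)
    (v : ℕ → ℕ → ℕ → M) :
    S4 (r+1) (fun i j m n =>
      ((-1:ℂ)^(i+j+m+n) * (r.choose i : ℂ) * (r.choose j : ℂ) * (r.choose m : ℂ)
        * (r.choose n : ℂ) * (α i j m + (n:ℂ) * b)) • v i j m) = 0 := by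
  unfold S4
  rw [Finset.sum_eq_zero]
  intro i _
  rw [Finset.sum_eq_zero]
  intro j _
  rw [Finset.sum_eq_zero]
  intro m _
  have : ∀ n : ℕ, ((-1:ℂ)^(i+j+m+n) * (r.choose i : ℂ) * (r.choose j : ℂ) * (r.choose m : ℂ)
        * (r.choose n : ℂ) * (α i j m + (n:ℂ) * b)) • v i j m
      = ((-1:ℂ)^(i+j+m) * (r.choose i : ℂ) * (r.choose j : ℂ) * (r.choose m : ℂ)) •
        (((-1:ℂ)^n * (r.choose n : ℂ) * (α i j m + (n:ℂ) * b)) • v i j m) := by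
    intro n
    rw [smul_smul]
    congr 1
    rw [pow_add]
    ring
  rw [Finset.sum_congr rfl fun n _ => this n, ← Finset.smul_sum, ← Finset.sum_smul,
    alt_sum_affine hr, zero_smul, smul_zero]

/-- one-step Vandermonde convolution for module-valued sums -/
theorem vander_step (N₁ N₂ : ℕ) (f : ℕ → M) :
    ∑ a ∈ range (N₁+1), ∑ b ∈ range (N₂+1),
      ((N₁.choose a : ℂ) * (N₂.choose b : ℂ)) • f (a+b)
    = ∑ t ∈ range (N₁+N₂+1), ((N₁+N₂).choose t : ℂ) • f t := by
  classical
  set T := N₁ + N₂ with hT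
  set g : ℕ × ℕ → M := fun ab => ((N₁.choose ab.1 : ℂ) * (N₂.choose ab.2 : ℂ)) • f (ab.1+ab.2)
    with hg
  have hzero : ∀ ab : ℕ × ℕ, (N₁ < ab.1 ∨ N₂ < ab.2) → g ab = 0 := by
    intro ab hab
    rcases hab with h1 | h1 <;> simp [hg, Nat.choose_eq_zero_of_lt h1]
  have hL : (∑ a ∈ range (N₁+1), ∑ b ∈ range (N₂+1),
      ((N₁.choose a : ℂ) * (N₂.choose b : ℂ)) • f (a+b))
      = ∑ ab ∈ range (N₁+1) ×ˢ range (N₂+1), g ab := by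
    rw [Finset.sum_product]
  have hsub : range (N₁+1) ×ˢ range (N₂+1) ⊆ range (T+1) ×ˢ range (T+1) := by
    apply Finset.product_subset_product <;> exact Finset.range_subset_range.2 (by omega)
  have hL2 : ∑ ab ∈ range (N₁+1) ×ˢ range (N₂+1), g ab
      = ∑ ab ∈ range (T+1) ×ˢ range (T+1), g ab := by
    apply Finset.sum_subset hsub
    intro ab _ hnot
    apply hzero
    simp only [Finset.mem_product, Finset.mem_range] at hnot
    omega
  have hR : ∀ t : ℕ, ((T).choose t : ℂ) • f t = ∑ ab ∈ Finset.HasAntidiagonal.antidiagonal t, g ab := by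
    intro t
    have : ∀ ab ∈ Finset.HasAntidiagonal.antidiagonal t, g ab
        = ((N₁.choose ab.1 : ℂ) * (N₂.choose ab.2 : ℂ)) • f t := by
      intro ab hab
      rw [Finset.HasAntidiagonal.mem_antidiagonal] at hab
      simp [hg, hab]
    rw [Finset.sum_congr rfl this, ← Finset.sum_smul]
    congr 1
    rw [hT, Nat.add_choose_eq]
    push_cast
    rfl
  rw [hL, hL2, Finset.sum_congr rfl fun t _ => hR t]
  have hdisj : ∀ x ∈ (range (T+1) : Finset ℕ), ∀ y ∈ (range (T+1) : Finset ℕ), x ≠ y →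
      Disjoint (Finset.HasAntidiagonal.antidiagonal x) (Finset.HasAntidiagonal.antidiagonal y) := by
    intro x _ y _ hxy
    rw [Finset.disjoint_left]
    intro ab h1 h2
    rw [Finset.HasAntidiagonal.mem_antidiagonal] at h1 h2
    omega
  rw [← Finset.sum_biUnion hdisj]
  apply (Finset.sum_subset _ _).symm
  · intro ab hab
    rw [Finset.mem_biUnion] at hab
    obtain ⟨t, ht, habt⟩ := hab
    rw [Finset.mem_range] at ht
    rw [Finset.HasAntidiagonal.mem_antidiagonal] at habt
    simp only [Finset.mem_product, Finset.mem_range]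
    omega
  · intro ab _ hnot
    apply hzero
    rw [Finset.mem_biUnion] at hnot
    push_neg at hnot
    by_contra hcon
    push_neg at hcon
    have h1 : ab.1 + ab.2 ≤ T := by omega
    exact hnot (ab.1+ab.2) (Finset.mem_range.2 (by omega)) (Finset.HasAntidiagonal.mem_antidiagonal.2 rfl)


theorem neg_one_pow_congr' {a b : ℕ} (hab : a % 2 = b % 2) : ((-1:ℂ))^a = (-1)^b := by
  conv_lhs => rw [← Nat.div_add_mod a 2]
  conv_rhs => rw [← Nat.div_add_mod b 2]
  rw [pow_add, pow_add, pow_mul, pow_mul, neg_one_sq, one_pow, one_pow, hab]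

/-- four-fold Vandermonde for alternating module-valued sums -/
theorem vander4 (r : ℕ) (f : ℕ → M) :
    (∑ i ∈ range (r+1), ∑ j ∈ range (r+1), ∑ m ∈ range (r+1), ∑ n ∈ range (r+1),
      ((-1:ℂ)^(i+j+m+n) * (r.choose i : ℂ) * (r.choose j : ℂ) * (r.choose m : ℂ)
        * (r.choose n : ℂ)) • f (i+j+m+n))
    = ∑ t ∈ range (4*r+1), ((-1:ℂ)^t * ((4*r).choose t : ℂ)) • f t := by
  set g : ℕ → M := fun z => ((-1:ℂ)^z) • f z with hgdef
  have h0 : ∀ i j m n : ℕ, ((-1:ℂ)^(i+j+m+n) * (r.choose i : ℂ) * (r.choose j : ℂ)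
        * (r.choose m : ℂ) * (r.choose n : ℂ)) • f (i+j+m+n)
      = (r.choose i : ℂ) • ((r.choose j : ℂ) •
          (((r.choose m : ℂ) * (r.choose n : ℂ)) • g (i+j+(m+n)))) := by
    intro i j m n
    have harg : i+j+(m+n) = i+j+m+n := by omega
    rw [hgdef]
    simp only [harg, smul_smul]
    congr 1
    ring
  have h1 : ∀ i j : ℕ, (∑ m ∈ range (r+1), ∑ n ∈ range (r+1),
        ((r.choose m : ℂ) * (r.choose n : ℂ)) • g (i+j+(m+n)))
      = ∑ u ∈ range (r+r+1), ((r+r).choose u : ℂ) • g (i+(j+u)) := by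
    intro i j
    rw [vander_step r r (fun z => g (i+j+z))]
    exact Finset.sum_congr rfl fun u _ => by rw [show i+j+u = i+(j+u) by omega]
  have h2 : ∀ i : ℕ, (∑ j ∈ range (r+1), (r.choose j : ℂ) •
        ∑ u ∈ range (r+r+1), ((r+r).choose u : ℂ) • g (i+(j+u)))
      = ∑ v ∈ range (r+(r+r)+1), ((r+(r+r)).choose v : ℂ) • g (i+v) := by
    intro i
    rw [← vander_step r (r+r) (fun z => g (i+z))]
    refine Finset.sum_congr rfl fun j _ => ?_
    rw [Finset.smul_sum]
    exact Finset.sum_congr rfl fun u _ => by rw [smul_smul]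
  have h3 : (∑ i ∈ range (r+1), (r.choose i : ℂ) •
        ∑ v ∈ range (r+(r+r)+1), ((r+(r+r)).choose v : ℂ) • g (i+v))
      = ∑ t ∈ range (r+(r+(r+r))+1), ((r+(r+(r+r))).choose t : ℂ) • g t := by
    rw [← vander_step r (r+(r+r)) g]
    refine Finset.sum_congr rfl fun i _ => ?_
    rw [Finset.smul_sum]
    exact Finset.sum_congr rfl fun v _ => by rw [smul_smul]
  calc (∑ i ∈ range (r+1), ∑ j ∈ range (r+1), ∑ m ∈ range (r+1), ∑ n ∈ range (r+1),
      ((-1:ℂ)^(i+j+m+n) * (r.choose i : ℂ) * (r.choose j : ℂ) * (r.choose m : ℂ)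
        * (r.choose n : ℂ)) • f (i+j+m+n))
      = ∑ i ∈ range (r+1), (r.choose i : ℂ) • (∑ j ∈ range (r+1), (r.choose j : ℂ) •
          ∑ m ∈ range (r+1), ∑ n ∈ range (r+1),
            ((r.choose m : ℂ) * (r.choose n : ℂ)) • g (i+j+(m+n))) := by
        symm
        simp only [Finset.smul_sum]
        exact Finset.sum_congr rfl fun i _ => Finset.sum_congr rfl fun j _ =>
          Finset.sum_congr rfl fun m _ => Finset.sum_congr rfl fun n _ => (h0 i j m n).symm
    _ = ∑ i ∈ range (r+1), (r.choose i : ℂ) • (∑ j ∈ range (r+1), (r.choose j : ℂ) •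
          ∑ u ∈ range (r+r+1), ((r+r).choose u : ℂ) • g (i+(j+u))) := by
        exact Finset.sum_congr rfl fun i _ => by
          rw [Finset.sum_congr rfl fun j _ => by rw [h1 i j]]
    _ = ∑ i ∈ range (r+1), (r.choose i : ℂ) •
          ∑ v ∈ range (r+(r+r)+1), ((r+(r+r)).choose v : ℂ) • g (i+v) := by
        exact Finset.sum_congr rfl fun i _ => by rw [h2 i]
    _ = ∑ t ∈ range (r+(r+(r+r))+1), ((r+(r+(r+r))).choose t : ℂ) • g t := h3
    _ = ∑ t ∈ range (4*r+1), ((-1:ℂ)^t * ((4*r).choose t : ℂ)) • f t := by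
        rw [show r+(r+(r+r)) = 4*r by ring]
        refine Finset.sum_congr rfl fun t _ => ?_
        rw [hgdef]
        rw [smul_smul]
        congr 1
        ring

end Infra3

section MoreInfra
variable {M : Type*} [AddCommGroup M] [Module ℂ M]

theorem S4_smul {N : ℕ} (c : ℂ) (F : ℕ → ℕ → ℕ → ℕ → M) :
    c • S4 N F = S4 N (fun i j m n => c • F i j m n) := by
  simp [S4, Finset.smul_sum]

omit [Module ℂ M] in
theorem S4_sub {N : ℕ} (F G : ℕ → ℕ → ℕ → ℕ → M) :
    S4 N (fun i j m n => F i j m n - G i j m n) = S4 N F - S4 N G := by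
  simp [S4, Finset.sum_sub_distrib]

omit [Module ℂ M] in
theorem S4_neg {N : ℕ} (F : ℕ → ℕ → ℕ → ℕ → M) :
    S4 N (fun i j m n => - F i j m n) = - S4 N F := by
  simp [S4, ← Finset.sum_neg_distrib]

theorem self_neg_zero (x : M) (hx : x = -x) : x = 0 := by
  have h2 : (2:ℂ) • x = 0 := by
    rw [two_smul]
    nth_rewrite 1 [hx]
    simp
  calc x = ((2:ℂ)⁻¹ * 2) • x := by norm_num
  _ = (2:ℂ)⁻¹ • ((2:ℂ) • x) := by rw [mul_smul]
  _ = 0 := by rw [h2, smul_zero]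

theorem nsmul_sub' {G : Type*} [AddCommGroup G] (a b : ℕ) (hba : b ≤ a) (x : G) :
    (a - b) • x = a • x - b • x := by
  have : (a - b) • x + b • x = a • x := by
    rw [← add_smul, Nat.sub_add_cancel hba]
  rw [← this]; abel

end MoreInfra


/-- the quadruple coefficient `(-1)^(i+j+m+n) C(r,i)C(r,j)C(r,m)C(r,n)` -/
noncomputable def C4 (r i j m n : ℕ) : ℂ :=
  (-1:ℂ)^(i+j+m+n) * (r.choose i) * (r.choose j) * (r.choose m) * (r.choose n)

theorem C4_pairs (r i j m n : ℕ) : C4 r m n i j = C4 r i j m n := by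
  unfold C4
  rw [neg_one_pow_congr' (a := m+n+i+j) (b := i+j+m+n) (by omega)]
  ring

theorem C4_rev (r i j m n : ℕ) : C4 r n m j i = C4 r i j m n := by
  unfold C4
  rw [neg_one_pow_congr' (a := n+m+j+i) (b := i+j+m+n) (by omega)]
  ring

theorem C4_sw3 (r i j m n : ℕ) : C4 r i j n m = C4 r i j m n := by
  unfold C4
  rw [neg_one_pow_congr' (a := i+j+n+m) (b := i+j+m+n) (by omega)]
  ring

theorem C4_sw1 (r i j m n : ℕ) : C4 r j i m n = C4 r i j m n := by
  unfold C4
  rw [neg_one_pow_congr' (a := j+i+m+n) (b := i+j+m+n) (by omega)]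
  ring

theorem C4_perm3142 (r i j m n : ℕ) : C4 r m n j i = C4 r i j m n := by
  unfold C4
  rw [neg_one_pow_congr' (a := m+n+j+i) (b := i+j+m+n) (by omega)]
  ring

theorem C4_perm4312 (r i j m n : ℕ) : C4 r n m i j = C4 r i j m n := by
  unfold C4
  rw [neg_one_pow_congr' (a := n+m+i+j) (b := i+j+m+n) (by omega)]
  ring

theorem C4_reflect (r i j m n : ℕ) (hi : i ≤ r) (hj : j ≤ r) (hm : m ≤ r) (hn : n ≤ r) :
    C4 r (r-j) (r-i) (r-n) (r-m) = C4 r i j m n := by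
  unfold C4
  rw [neg_one_pow_congr' (a := (r-j)+(r-i)+(r-n)+(r-m)) (b := i+j+m+n) (by omega)]
  rw [Nat.choose_symm hj, Nat.choose_symm hi, Nat.choose_symm hn, Nat.choose_symm hm]
  ring

theorem C4_reflect24 (r i j m n : ℕ) (hj : j ≤ r) (hn : n ≤ r) :
    C4 r i (r-j) m (r-n) = C4 r i j m n := by
  unfold C4
  rw [neg_one_pow_congr' (a := i+(r-j)+m+(r-n)) (b := i+j+m+n) (by omega)]
  rw [Nat.choose_symm hj, Nat.choose_symm hn]

section Main
variable {Γ : AddSubgroup ℂ} {R : Type} [Ring R] [Algebra ℂ R] {e : Γ → R}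

theorem word4_eq (e : Γ → R) {x1 x2 x3 x4 y1 y2 y3 y4 : Γ} (h1 : x1=y1) (h2 : x2=y2)
    (h3 : x3=y3) (h4 : x4=y4) :
    (e x1 * e x2) * (e x3 * e x4) = (e y1 * e y2) * (e y3 * e y4) := by rw [h1,h2,h3,h4]

theorem word3_eq (e : Γ → R) {x1 x2 x3 y1 y2 y3 : Γ} (h1 : x1=y1) (h2 : x2=y2)
    (h3 : x3=y3) :
    (e x1 * e x2) * e x3 = (e y1 * e y2) * e y3 := by rw [h1,h2,h3]

theorem word2_eq (e : Γ → R) {x1 x2 y1 y2 : Γ} (h1 : x1=y1) (h2 : x2=y2) :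
    e x1 * e x2 = e y1 * e y2 := by rw [h1,h2]

variable (hcomm : ∀ k m : Γ, e k * e m - e m * e k = ((m : ℂ) - (k : ℂ)) • e (k + m))
include hcomm

theorem eswap (x y : Γ) : e x * e y = e y * e x + ((y:ℂ) - (x:ℂ)) • e (x + y) := by
  have h1 := hcomm x y
  rw [sub_eq_iff_eq_add] at h1
  rw [h1]
  abel

/-- swap the two middle letters of a quartic word -/
theorem swap_mid (a b c d : Γ) : (e a * e b) * (e c * e d)
    = (e a * e c) * (e b * e d) + (((c:ℂ) - (b:ℂ)) • ((e a * e (b+c)) * e d)) := by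
  have h1 := eswap hcomm b c
  calc (e a * e b) * (e c * e d) = e a * ((e b * e c) * e d) := by
        simp only [mul_assoc]
  _ = e a * (((e c * e b) + ((c:ℂ) - (b:ℂ)) • e (b+c)) * e d) := by rw [← h1]
  _ = (e a * e c) * (e b * e d) + (((c:ℂ) - (b:ℂ)) • ((e a * e (b+c)) * e d)) := by
        rw [add_mul, mul_add, smul_mul_assoc, mul_smul_comm]
        simp only [mul_assoc]

theorem expand_uPKv (u P K v : Γ) : (e u * e P) * (e K * e v)
    = (e P * e K) * (e v * e u)
    + ((v:ℂ)-(u:ℂ)) • ((e P * e K) * e (u+v))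
    + ((K:ℂ)-(u:ℂ)) • ((e P * e (u+K)) * e v)
    + ((P:ℂ)-(u:ℂ)) • ((e (u+P) * e K) * e v) := by
  have h1 := eswap hcomm u P
  have h2 := eswap hcomm u K
  have h3 := eswap hcomm u v
  calc (e u * e P) * (e K * e v)
      = (e P * e u + ((P:ℂ)-(u:ℂ)) • e (u+P)) * (e K * e v) := by rw [← h1]
  _ = e P * ((e u * e K) * e v) + ((P:ℂ)-(u:ℂ)) • ((e (u+P) * e K) * e v) := by
        rw [add_mul, smul_mul_assoc]
        simp only [mul_assoc]
  _ = e P * ((e K * e u + ((K:ℂ)-(u:ℂ)) • e (u+K)) * e v)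
        + ((P:ℂ)-(u:ℂ)) • ((e (u+P) * e K) * e v) := by rw [← h2]
  _ = (e P * e K) * (e u * e v) + ((K:ℂ)-(u:ℂ)) • ((e P * e (u+K)) * e v)
        + ((P:ℂ)-(u:ℂ)) • ((e (u+P) * e K) * e v) := by
        rw [add_mul, mul_add, smul_mul_assoc, mul_smul_comm]
        simp only [mul_assoc]
  _ = (e P * e K) * (e v * e u + ((v:ℂ)-(u:ℂ)) • e (u+v))
        + ((K:ℂ)-(u:ℂ)) • ((e P * e (u+K)) * e v)
        + ((P:ℂ)-(u:ℂ)) • ((e (u+P) * e K) * e v) := by rw [← h3]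
  _ = (e P * e K) * (e v * e u)
        + ((v:ℂ)-(u:ℂ)) • ((e P * e K) * e (u+v))
        + ((K:ℂ)-(u:ℂ)) • ((e P * e (u+K)) * e v)
        + ((P:ℂ)-(u:ℂ)) • ((e (u+P) * e K) * e v) := by
        rw [mul_add, mul_smul_comm]

/-- the anticommutator-difference of a `uMv` and `vMu` word -/
theorem uMv_sub_vMu (u v P K : Γ) :
    (e u * e P) * (e K * e v) - (e v * e P) * (e K * e u)
    = ((v:ℂ)-(u:ℂ)) • ((e P * e K) * e (u+v))
    + ((K:ℂ)-(u:ℂ)) • ((e P * e (u+K)) * e v)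
    + ((P:ℂ)-(u:ℂ)) • ((e (u+P) * e K) * e v)
    - ((K:ℂ)-(v:ℂ)) • ((e P * e (v+K)) * e u)
    - ((P:ℂ)-(v:ℂ)) • ((e (v+P) * e K) * e u) := by
  rw [expand_uPKv hcomm u P K v, expand_uPKv hcomm v P K u]
  rw [show v + u = u + v from by abel]
  have h3 : (e P * e K) * (e v * e u)
      = (e P * e K) * (e u * e v) + ((u:ℂ)-(v:ℂ)) • ((e P * e K) * e (u+v)) := by
    rw [eswap hcomm v u, show v + u = u + v from by abel, mul_add, mul_smul_comm]
  rw [h3]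
  module

theorem XYZ_sub_ZXY (x y z : Γ) :
    (e x * e y) * e z - (e z * e x) * e y
    = ((z:ℂ)-(y:ℂ)) • (e x * e (y+z)) + ((z:ℂ)-(x:ℂ)) • (e (x+z) * e y) := by
  have key : (e x * e y) * e z
      = (e z * e x) * e y + ((z:ℂ)-(y:ℂ)) • (e x * e (y+z))
        + ((z:ℂ)-(x:ℂ)) • (e (x+z) * e y) := by
    calc (e x * e y) * e z = e x * (e y * e z) := by rw [mul_assoc]
    _ = e x * (e z * e y + ((z:ℂ)-(y:ℂ)) • e (y+z)) := by rw [← eswap hcomm y z]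
    _ = (e x * e z) * e y + ((z:ℂ)-(y:ℂ)) • (e x * e (y+z)) := by
        rw [mul_add, mul_smul_comm, mul_assoc]
    _ = (e z * e x + ((z:ℂ)-(x:ℂ)) • e (x+z)) * e y
        + ((z:ℂ)-(y:ℂ)) • (e x * e (y+z)) := by rw [← eswap hcomm x z]
    _ = (e z * e x) * e y + ((z:ℂ)-(y:ℂ)) • (e x * e (y+z))
        + ((z:ℂ)-(x:ℂ)) • (e (x+z) * e y) := by
        rw [add_mul, smul_mul_assoc]
        abel
  rw [key]
  abel


/-- the coefficient of the correction terms -/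
theorem step1 (r : ℕ) (h k s q p : Γ) :
    S4 (r+1) (fun i j m n => C4 r i j m n •
        ((e (k - i•h - m•h) * e (s - j•h + m•h)) * (e (q + i•h - n•h) * e (p + j•h + n•h))))
    - S4 (r+1) (fun i j m n => C4 r i j m n •
        ((e (k - i•h - m•h) * e (q - j•h + m•h)) * (e (s + i•h - n•h) * e (p + j•h + n•h))))
    = ((q:ℂ)-(s:ℂ)) • S4 (r+1) (fun i j m n => C4 r i j m n •
        ((e (k - i•h - m•h) * e (s + q + i•h + m•h - j•h - n•h)) * e (p + j•h + n•h))) := by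
  have hsplit : ∀ i j m n : ℕ, C4 r i j m n •
        ((e (k - i•h - m•h) * e (s - j•h + m•h)) * (e (q + i•h - n•h) * e (p + j•h + n•h)))
      = C4 r i j m n •
          ((e (k - i•h - m•h) * e (q + i•h - n•h)) * (e (s - j•h + m•h) * e (p + j•h + n•h)))
        + (C4 r i j m n * (((q:ℂ)-(s:ℂ)) + (((i:ℂ)+(j:ℂ)-(m:ℂ)-(n:ℂ))*(h:ℂ)))) •
          ((e (k - i•h - m•h) * e (s + q + i•h + m•h - j•h - n•h)) * e (p + j•h + n•h)) := by
    intro i j m n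
    rw [swap_mid hcomm (k - i•h - m•h) (s - j•h + m•h) (q + i•h - n•h) (p + j•h + n•h)]
    have hz : ((q + i•h - n•h : Γ):ℂ) - ((s - j•h + m•h : Γ):ℂ)
        = ((q:ℂ)-(s:ℂ)) + (((i:ℂ)+(j:ℂ)-(m:ℂ)-(n:ℂ))*(h:ℂ)) := by
      push_cast
      ring
    have hw : (s - j•h + m•h) + (q + i•h - n•h) = (s + q + i•h + m•h - j•h - n•h : Γ) := by
      abel
    rw [hz, hw, smul_add, smul_smul]
  rw [S4_congr (fun i j m n _ _ _ _ => hsplit i j m n), S4_add]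
  have hswap : S4 (r+1) (fun i j m n => C4 r i j m n •
        ((e (k - i•h - m•h) * e (q + i•h - n•h)) * (e (s - j•h + m•h) * e (p + j•h + n•h))))
      = S4 (r+1) (fun i j m n => C4 r i j m n •
        ((e (k - i•h - m•h) * e (q - j•h + m•h)) * (e (s + i•h - n•h) * e (p + j•h + n•h)))) := by
    rw [S4_pairs]
    refine S4_congr fun i j m n _ _ _ _ => ?_
    rw [C4_pairs]
    congr 1
    exact word4_eq e (by abel) (by abel) (by abel) (by abel)
  rw [hswap]
  have hsplit2 : ∀ i j m n : ℕ,
      (C4 r i j m n * (((q:ℂ)-(s:ℂ)) + (((i:ℂ)+(j:ℂ)-(m:ℂ)-(n:ℂ))*(h:ℂ)))) •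
          ((e (k - i•h - m•h) * e (s + q + i•h + m•h - j•h - n•h)) * e (p + j•h + n•h))
      = ((q:ℂ)-(s:ℂ)) • (C4 r i j m n •
          ((e (k - i•h - m•h) * e (s + q + i•h + m•h - j•h - n•h)) * e (p + j•h + n•h)))
        + (C4 r i j m n * ((((i:ℂ)+(j:ℂ)-(m:ℂ)-(n:ℂ))*(h:ℂ)))) •
          ((e (k - i•h - m•h) * e (s + q + i•h + m•h - j•h - n•h)) * e (p + j•h + n•h)) := by
    intro i j m n
    rw [smul_smul, ← add_smul]
    congr 1
    ring
  rw [S4_congr (fun i j m n _ _ _ _ => hsplit2 i j m n), S4_add]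
  have hzero : S4 (r+1) (fun i j m n =>
      (C4 r i j m n * ((((i:ℂ)+(j:ℂ)-(m:ℂ)-(n:ℂ))*(h:ℂ)))) •
          ((e (k - i•h - m•h) * e (s + q + i•h + m•h - j•h - n•h)) * e (p + j•h + n•h))) = 0 := by
    apply self_neg_zero
    nth_rewrite 1 [S4_pairs]
    rw [← S4_neg]
    refine S4_congr fun i j m n _ _ _ _ => ?_
    rw [C4_pairs]
    rw [word3_eq e (show k - m•h - i•h = k - i•h - m•h from by abel)
      (show s + q + m•h + i•h - n•h - j•h = s + q + i•h + m•h - j•h - n•h from by abel)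
      (show p + n•h + j•h = p + j•h + n•h from by abel)]
    rw [← neg_smul]
    congr 1
    ring
  rw [hzero, S4_smul]
  abel


theorem step2 {r : ℕ} (hr : 2 ≤ r) (h k s q p : Γ) :
    S4 (r+1) (fun i j m n => C4 r i j m n • ((e (q + i•h - m•h) * e (p + j•h + m•h)) * (e (k - i•h - n•h) * e (s - j•h + n•h))))
    - S4 (r+1) (fun i j m n => C4 r i j m n • ((e (s + i•h - m•h) * e (p + j•h + m•h)) * (e (k - i•h - n•h) * e (q - j•h + n•h))))
    = ((s:ℂ)-(q:ℂ)) • S4 (r+1) (fun i j m n => C4 r i j m n • ((e (p + j•h + m•h) * e (k - i•h - n•h)) * e (s + q + i•h + n•h - j•h - m•h))) := by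
  have htau : S4 (r+1) (fun i j m n => C4 r i j m n • ((e (s + i•h - m•h) * e (p + j•h + m•h)) * (e (k - i•h - n•h) * e (q - j•h + n•h))))
      = S4 (r+1) (fun i j m n => C4 r i j m n • ((e (s - j•h + n•h) * e (p + j•h + m•h)) * (e (k - i•h - n•h) * e (q + i•h - m•h)))) := by
    rw [S4_rev]
    refine S4_congr fun i j m n _ _ _ _ => ?_
    rw [C4_rev]
    congr 1
    exact word4_eq e (by abel) (by abel) (by abel) (by abel)
  rw [htau, ← S4_sub]
  have hterm : ∀ i j m n : ℕ,
      C4 r i j m n • ((e (q + i•h - m•h) * e (p + j•h + m•h)) * (e (k - i•h - n•h) * e (s - j•h + n•h))) - C4 r i j m n • ((e (s - j•h + n•h) * e (p + j•h + m•h)) * (e (k - i•h - n•h) * e (q + i•h - m•h)))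
      = (C4 r i j m n * (((s - j•h + n•h : Γ):ℂ) - ((q + i•h - m•h : Γ):ℂ))) • ((e (p + j•h + m•h) * e (k - i•h - n•h)) * e (s + q + i•h + n•h - j•h - m•h))
        + (C4 r i j m n * (((k - i•h - n•h : Γ):ℂ) - ((q + i•h - m•h : Γ):ℂ))) • ((e (p + j•h + m•h) * e (k + q - m•h - n•h)) * e (s - j•h + n•h))
        + (C4 r i j m n * (((p + j•h + m•h : Γ):ℂ) - ((q + i•h - m•h : Γ):ℂ))) • ((e (q + p + i•h + j•h) * e (k - i•h - n•h)) * e (s - j•h + n•h))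
        - (C4 r i j m n * (((k - i•h - n•h : Γ):ℂ) - ((s - j•h + n•h : Γ):ℂ))) • ((e (p + j•h + m•h) * e (k + s - i•h - j•h)) * e (q + i•h - m•h))
        - (C4 r i j m n * (((p + j•h + m•h : Γ):ℂ) - ((s - j•h + n•h : Γ):ℂ))) • ((e (p + s + m•h + n•h) * e (k - i•h - n•h)) * e (q + i•h - m•h)) := by
    intro i j m n
    rw [← smul_sub, uMv_sub_vMu hcomm (q + i•h - m•h) (s - j•h + n•h) (p + j•h + m•h) (k - i•h - n•h)]
    rw [show (e (p + j•h + m•h) * e (k - i•h - n•h)) * e ((q + i•h - m•h) + (s - j•h + n•h))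
        = (e (p + j•h + m•h) * e (k - i•h - n•h)) * e (s + q + i•h + n•h - j•h - m•h) from word3_eq e rfl rfl (by abel)]
    rw [show (e (p + j•h + m•h) * e ((q + i•h - m•h) + (k - i•h - n•h))) * e (s - j•h + n•h)
        = (e (p + j•h + m•h) * e (k + q - m•h - n•h)) * e (s - j•h + n•h) from word3_eq e rfl (by abel) rfl]
    rw [show (e ((q + i•h - m•h) + (p + j•h + m•h)) * e (k - i•h - n•h)) * e (s - j•h + n•h)
        = (e (q + p + i•h + j•h) * e (k - i•h - n•h)) * e (s - j•h + n•h) from word3_eq e (by abel) rfl rfl]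
    rw [show (e (p + j•h + m•h) * e ((s - j•h + n•h) + (k - i•h - n•h))) * e (q + i•h - m•h)
        = (e (p + j•h + m•h) * e (k + s - i•h - j•h)) * e (q + i•h - m•h) from word3_eq e rfl (by abel) rfl]
    rw [show (e ((s - j•h + n•h) + (p + j•h + m•h)) * e (k - i•h - n•h)) * e (q + i•h - m•h)
        = (e (p + s + m•h + n•h) * e (k - i•h - n•h)) * e (q + i•h - m•h) from word3_eq e (by abel) rfl rfl]
    simp only [smul_add, smul_sub, smul_smul]
  rw [S4_congr (fun i j m n _ _ _ _ => hterm i j m n)]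
  rw [S4_sub, S4_sub, S4_add, S4_add]
  have hz3 : S4 (r+1) (fun i j m n => (C4 r i j m n * (((p + j•h + m•h : Γ):ℂ) - ((q + i•h - m•h : Γ):ℂ))) • ((e (q + p + i•h + j•h) * e (k - i•h - n•h)) * e (s - j•h + n•h))) = 0 := by
    calc S4 (r+1) (fun i j m n => (C4 r i j m n * (((p + j•h + m•h : Γ):ℂ) - ((q + i•h - m•h : Γ):ℂ))) • ((e (q + p + i•h + j•h) * e (k - i•h - n•h)) * e (s - j•h + n•h)))
        = S4 (r+1) (fun i j m n => (C4 r i j n m * (((p + j•h + n•h : Γ):ℂ) - ((q + i•h - n•h : Γ):ℂ))) •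
            ((e (q + p + i•h + j•h) * e (k - i•h - m•h)) * e (s - j•h + m•h))) := S4_sw3 _
    _ = S4 (r+1) (fun i j m n => ((-1:ℂ)^(i+j+m+n) * (r.choose i : ℂ) * (r.choose j : ℂ) * (r.choose m : ℂ) * (r.choose n : ℂ) * (((p:ℂ)-(q:ℂ)+((j:ℂ)-(i:ℂ))*(h:ℂ)) + (n:ℂ) * (2*(h:ℂ)))) • ((e (q + p + i•h + j•h) * e (k - i•h - m•h)) * e (s - j•h + m•h))) := by
        refine S4_congr fun i j m n _ _ _ _ => ?_
        congr 1
        rw [C4_sw3]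
        unfold C4
        push_cast
        ring
    _ = 0 := S4_vanish4 hr (fun i j m => ((p:ℂ)-(q:ℂ)+((j:ℂ)-(i:ℂ))*(h:ℂ))) (2*(h:ℂ)) (fun i j m => (e (q + p + i•h + j•h) * e (k - i•h - m•h)) * e (s - j•h + m•h))

  have hz2 : S4 (r+1) (fun i j m n => (C4 r i j m n * (((k - i•h - n•h : Γ):ℂ) - ((q + i•h - m•h : Γ):ℂ))) • ((e (p + j•h + m•h) * e (k + q - m•h - n•h)) * e (s - j•h + n•h))) = 0 := by
    calc S4 (r+1) (fun i j m n => (C4 r i j m n * (((k - i•h - n•h : Γ):ℂ) - ((q + i•h - m•h : Γ):ℂ))) • ((e (p + j•h + m•h) * e (k + q - m•h - n•h)) * e (s - j•h + n•h)))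
        = S4 (r+1) (fun i j m n => (C4 r j i m n * (((k - j•h - n•h : Γ):ℂ) - ((q + j•h - m•h : Γ):ℂ))) • ((e (p + i•h + m•h) * e (k + q - m•h - n•h)) * e (s - i•h + n•h))) := S4_sw1 _
    _ = S4 (r+1) (fun i j m n => (C4 r n m i j * (((k - n•h - j•h : Γ):ℂ) - ((q + n•h - i•h : Γ):ℂ))) • ((e (p + m•h + i•h) * e (k + q - i•h - j•h)) * e (s - m•h + j•h))) := S4_pairs _
    _ = S4 (r+1) (fun i j m n => ((-1:ℂ)^(i+j+m+n) * (r.choose i : ℂ) * (r.choose j : ℂ) * (r.choose m : ℂ) * (r.choose n : ℂ) * (((k:ℂ)-(q:ℂ)+((i:ℂ)-(j:ℂ))*(h:ℂ)) + (n:ℂ) * (-2*(h:ℂ)))) • ((e (p + m•h + i•h) * e (k + q - i•h - j•h)) * e (s - m•h + j•h))) := by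
        refine S4_congr fun i j m n _ _ _ _ => ?_
        congr 1
        rw [C4_perm4312]
        unfold C4
        push_cast
        ring
    _ = 0 := S4_vanish4 hr (fun i j m => ((k:ℂ)-(q:ℂ)+((i:ℂ)-(j:ℂ))*(h:ℂ))) (-2*(h:ℂ))
        (fun i j m => (e (p + m•h + i•h) * e (k + q - i•h - j•h)) * e (s - m•h + j•h))

  have hz5 : S4 (r+1) (fun i j m n => (C4 r i j m n * (((p + j•h + m•h : Γ):ℂ) - ((s - j•h + n•h : Γ):ℂ))) • ((e (p + s + m•h + n•h) * e (k - i•h - n•h)) * e (q + i•h - m•h))) = 0 := by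
    calc S4 (r+1) (fun i j m n => (C4 r i j m n * (((p + j•h + m•h : Γ):ℂ) - ((s - j•h + n•h : Γ):ℂ))) • ((e (p + s + m•h + n•h) * e (k - i•h - n•h)) * e (q + i•h - m•h)))
        = S4 (r+1) (fun i j m n => (C4 r m n i j * (((p + n•h + i•h : Γ):ℂ) - ((s - n•h + j•h : Γ):ℂ))) •
            ((e (p + s + i•h + j•h) * e (k - m•h - j•h)) * e (q + m•h - i•h))) := S4_pairs _
    _ = S4 (r+1) (fun i j m n => ((-1:ℂ)^(i+j+m+n) * (r.choose i : ℂ) * (r.choose j : ℂ) * (r.choose m : ℂ) * (r.choose n : ℂ) * (((p:ℂ)-(s:ℂ)+((i:ℂ)-(j:ℂ))*(h:ℂ)) + (n:ℂ) * (2*(h:ℂ)))) • ((e (p + s + i•h + j•h) * e (k - m•h - j•h)) * e (q + m•h - i•h))) := by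
        refine S4_congr fun i j m n _ _ _ _ => ?_
        congr 1
        rw [C4_pairs]
        unfold C4
        push_cast
        ring
    _ = 0 := S4_vanish4 hr (fun i j m => ((p:ℂ)-(s:ℂ)+((i:ℂ)-(j:ℂ))*(h:ℂ))) (2*(h:ℂ)) (fun i j m => (e (p + s + i•h + j•h) * e (k - m•h - j•h)) * e (q + m•h - i•h))

  have hz4 : S4 (r+1) (fun i j m n => (C4 r i j m n * (((k - i•h - n•h : Γ):ℂ) - ((s - j•h + n•h : Γ):ℂ))) • ((e (p + j•h + m•h) * e (k + s - i•h - j•h)) * e (q + i•h - m•h))) = 0 := by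
    calc S4 (r+1) (fun i j m n => (C4 r i j m n * (((k - i•h - n•h : Γ):ℂ) - ((s - j•h + n•h : Γ):ℂ))) • ((e (p + j•h + m•h) * e (k + s - i•h - j•h)) * e (q + i•h - m•h)))
        = S4 (r+1) (fun i j m n => ((-1:ℂ)^(i+j+m+n) * (r.choose i : ℂ) * (r.choose j : ℂ) * (r.choose m : ℂ) * (r.choose n : ℂ) * (((k:ℂ)-(s:ℂ)+((j:ℂ)-(i:ℂ))*(h:ℂ)) + (n:ℂ) * (-2*(h:ℂ)))) • ((e (p + j•h + m•h) * e (k + s - i•h - j•h)) * e (q + i•h - m•h))) := by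
          refine S4_congr fun i j m n _ _ _ _ => ?_
          congr 1
          unfold C4
          push_cast
          ring
    _ = 0 := S4_vanish4 hr (fun i j m => ((k:ℂ)-(s:ℂ)+((j:ℂ)-(i:ℂ))*(h:ℂ))) (-2*(h:ℂ))
        (fun i j m => (e (p + j•h + m•h) * e (k + s - i•h - j•h)) * e (q + i•h - m•h))

  rw [hz2, hz3, hz4, hz5]
  have hsplit1 : ∀ i j m n : ℕ, (C4 r i j m n * (((s - j•h + n•h : Γ):ℂ) - ((q + i•h - m•h : Γ):ℂ))) • ((e (p + j•h + m•h) * e (k - i•h - n•h)) * e (s + q + i•h + n•h - j•h - m•h))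
      = ((s:ℂ)-(q:ℂ)) • (C4 r i j m n • ((e (p + j•h + m•h) * e (k - i•h - n•h)) * e (s + q + i•h + n•h - j•h - m•h)))
        + (C4 r i j m n * (((m:ℂ)+(n:ℂ)-(i:ℂ)-(j:ℂ))*(h:ℂ))) • ((e (p + j•h + m•h) * e (k - i•h - n•h)) * e (s + q + i•h + n•h - j•h - m•h)) := by
    intro i j m n
    rw [show (((s - j•h + n•h : Γ):ℂ) - ((q + i•h - m•h : Γ):ℂ)) = ((s:ℂ)-(q:ℂ)) + (((m:ℂ)+(n:ℂ)-(i:ℂ)-(j:ℂ))*(h:ℂ)) from by push_cast; ring]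
    module
  rw [S4_congr (fun i j m n _ _ _ _ => hsplit1 i j m n), S4_add, ← S4_smul]
  have hzero1 : S4 (r+1) (fun i j m n =>
      (C4 r i j m n * (((m:ℂ)+(n:ℂ)-(i:ℂ)-(j:ℂ))*(h:ℂ))) • ((e (p + j•h + m•h) * e (k - i•h - n•h)) * e (s + q + i•h + n•h - j•h - m•h))) = 0 := by
    apply self_neg_zero
    nth_rewrite 1 [S4_rev]
    rw [← S4_neg]
    refine S4_congr fun i j m n _ _ _ _ => ?_
    rw [C4_rev]
    rw [word3_eq e (show p + m•h + j•h = p + j•h + m•h from by abel)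
      (show k - n•h - i•h = k - i•h - n•h from by abel)
      (show s + q + n•h + i•h - m•h - j•h = s + q + i•h + n•h - j•h - m•h from by abel)]
    rw [← neg_smul]
    congr 1
    ring
  rw [hzero1]
  abel


theorem step3 {r : ℕ} (hr : 2 ≤ r) (h k s q p : Γ) :
    ((q:ℂ)-(s:ℂ)) • S4 (r+1) (fun i j m n => C4 r i j m n • ((e (k - i•h - m•h) * e (s + q + i•h + m•h - j•h - n•h)) * e (p + j•h + n•h)))
    + ((s:ℂ)-(q:ℂ)) • S4 (r+1) (fun i j m n => C4 r i j m n • ((e (p + j•h + m•h) * e (k - i•h - n•h)) * e (s + q + i•h + n•h - j•h - m•h)))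
    = (((q:ℂ) - (s:ℂ)) * ((p:ℂ) - (k:ℂ) + 2 * (r:ℂ) * (h:ℂ))) •
        diffr Γ R e (4 * r) h (k + p + (2 * r) • h) (s + q - (2 * r) • h) := by
  have hBswap : S4 (r+1) (fun i j m n => C4 r i j m n • ((e (p + j•h + m•h) * e (k - i•h - n•h)) * e (s + q + i•h + n•h - j•h - m•h)))
      = S4 (r+1) (fun i j m n => C4 r i j m n • ((e (p + j•h + n•h) * e (k - i•h - m•h)) * e (s + q + i•h + m•h - j•h - n•h))) := by
    rw [S4_sw3]
    exact S4_congr fun i j m n _ _ _ _ => by rw [C4_sw3]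
  rw [hBswap]
  have hcollect : ((q:ℂ)-(s:ℂ)) • S4 (r+1) (fun i j m n => C4 r i j m n • ((e (k - i•h - m•h) * e (s + q + i•h + m•h - j•h - n•h)) * e (p + j•h + n•h)))
      + ((s:ℂ)-(q:ℂ)) • S4 (r+1) (fun i j m n => C4 r i j m n • ((e (p + j•h + n•h) * e (k - i•h - m•h)) * e (s + q + i•h + m•h - j•h - n•h)))
      = ((q:ℂ)-(s:ℂ)) • (S4 (r+1) (fun i j m n => C4 r i j m n • ((e (k - i•h - m•h) * e (s + q + i•h + m•h - j•h - n•h)) * e (p + j•h + n•h)))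
          - S4 (r+1) (fun i j m n => C4 r i j m n • ((e (p + j•h + n•h) * e (k - i•h - m•h)) * e (s + q + i•h + m•h - j•h - n•h)))) := by
    rw [smul_sub]
    rw [show ((s:ℂ)-(q:ℂ)) = -((q:ℂ)-(s:ℂ)) from by ring, neg_smul]
    abel
  rw [hcollect, ← S4_sub]
  have hterm : ∀ i j m n : ℕ,
      C4 r i j m n • ((e (k - i•h - m•h) * e (s + q + i•h + m•h - j•h - n•h)) * e (p + j•h + n•h)) - C4 r i j m n • ((e (p + j•h + n•h) * e (k - i•h - m•h)) * e (s + q + i•h + m•h - j•h - n•h))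
      = (C4 r i j m n * (((p + j•h + n•h : Γ):ℂ) - ((s + q + i•h + m•h - j•h - n•h : Γ):ℂ))) • (e (k - i•h - m•h) * e (s + q + p + i•h + m•h)) + (C4 r i j m n * (((p + j•h + n•h : Γ):ℂ) - ((k - i•h - m•h : Γ):ℂ))) • (e (k + p + j•h + n•h - i•h - m•h) * e (s + q + i•h + m•h - j•h - n•h)) := by
    intro i j m n
    rw [← smul_sub, XYZ_sub_ZXY hcomm (k - i•h - m•h) (s + q + i•h + m•h - j•h - n•h)
      (p + j•h + n•h)]
    rw [show e (k - i•h - m•h) * e ((s + q + i•h + m•h - j•h - n•h) + (p + j•h + n•h))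
        = e (k - i•h - m•h) * e (s + q + p + i•h + m•h) from word2_eq e rfl (by abel)]
    rw [show e ((k - i•h - m•h) + (p + j•h + n•h)) * e (s + q + i•h + m•h - j•h - n•h)
        = e (k + p + j•h + n•h - i•h - m•h) * e (s + q + i•h + m•h - j•h - n•h) from word2_eq e (by abel) rfl]
    simp only [smul_add, smul_smul]
  rw [S4_congr (fun i j m n _ _ _ _ => hterm i j m n), S4_add]
  have hzY : S4 (r+1) (fun i j m n => (C4 r i j m n * (((p + j•h + n•h : Γ):ℂ) - ((s + q + i•h + m•h - j•h - n•h : Γ):ℂ))) • (e (k - i•h - m•h) * e (s + q + p + i•h + m•h))) = 0 := by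
    calc S4 (r+1) (fun i j m n => (C4 r i j m n * (((p + j•h + n•h : Γ):ℂ) - ((s + q + i•h + m•h - j•h - n•h : Γ):ℂ))) • (e (k - i•h - m•h) * e (s + q + p + i•h + m•h)))
        = S4 (r+1) (fun i j m n => (C4 r m n i j *
            (((p + n•h + j•h : Γ):ℂ) - ((s + q + m•h + i•h - n•h - j•h : Γ):ℂ))) •
            (e (k - m•h - i•h) * e (s + q + p + m•h + i•h))) := S4_pairs _
    _ = S4 (r+1) (fun i j m n => ((-1:ℂ)^(i+j+m+n) * (r.choose i : ℂ) * (r.choose j : ℂ) * (r.choose m : ℂ) * (r.choose n : ℂ) *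
          (((p:ℂ)-(s:ℂ)-(q:ℂ)+(2*(j:ℂ)-(i:ℂ)-(m:ℂ))*(h:ℂ)) + (n:ℂ) * (2*(h:ℂ)))) •
          (e (k - m•h - i•h) * e (s + q + p + m•h + i•h))) := by
        refine S4_congr fun i j m n _ _ _ _ => ?_
        congr 1
        rw [C4_pairs]
        unfold C4
        push_cast
        ring
    _ = 0 := S4_vanish4 hr (fun i j m => ((p:ℂ)-(s:ℂ)-(q:ℂ)+(2*(j:ℂ)-(i:ℂ)-(m:ℂ))*(h:ℂ)))
        (2*(h:ℂ)) (fun i j m => e (k - m•h - i•h) * e (s + q + p + m•h + i•h))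
  rw [hzY, zero_add]
  -- symmetrize the coefficient
  have hsym : S4 (r+1) (fun i j m n =>
      (C4 r i j m n * (((i:ℂ)+(j:ℂ)+(m:ℂ)+(n:ℂ)-2*(r:ℂ))*(h:ℂ))) • (e (k + p + j•h + n•h - i•h - m•h) * e (s + q + i•h + m•h - j•h - n•h))) = 0 := by
    apply self_neg_zero
    nth_rewrite 1 [S4_rho]
    rw [← S4_neg]
    refine S4_congr fun i j m n hi hj hm hn => ?_
    have hi' : i ≤ r := by omega
    have hj' : j ≤ r := by omega
    have hm' : m ≤ r := by omega
    have hn' : n ≤ r := by omega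
    rw [C4_reflect r i j m n hi' hj' hm' hn']
    rw [word2_eq e
      (show k + p + (r-i)•h + (r-m)•h - (r-j)•h - (r-n)•h = k + p + j•h + n•h - i•h - m•h from by
        rw [nsmul_sub' r i hi' h, nsmul_sub' r m hm' h, nsmul_sub' r j hj' h,
          nsmul_sub' r n hn' h]
        abel)
      (show s + q + (r-j)•h + (r-n)•h - (r-i)•h - (r-m)•h = s + q + i•h + m•h - j•h - n•h from by
        rw [nsmul_sub' r i hi' h, nsmul_sub' r m hm' h, nsmul_sub' r j hj' h,
          nsmul_sub' r n hn' h]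
        abel)]
    rw [← neg_smul]
    congr 1
    rw [Nat.cast_sub hi', Nat.cast_sub hj', Nat.cast_sub hm', Nat.cast_sub hn']
    ring
  have hsplitX : ∀ i j m n : ℕ, (C4 r i j m n * (((p + j•h + n•h : Γ):ℂ) - ((k - i•h - m•h : Γ):ℂ))) • (e (k + p + j•h + n•h - i•h - m•h) * e (s + q + i•h + m•h - j•h - n•h))
      = (C4 r i j m n * (((p:ℂ)-(k:ℂ)+2*(r:ℂ)*(h:ℂ)))) • (e (k + p + j•h + n•h - i•h - m•h) * e (s + q + i•h + m•h - j•h - n•h))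
        + (C4 r i j m n * (((i:ℂ)+(j:ℂ)+(m:ℂ)+(n:ℂ)-2*(r:ℂ))*(h:ℂ))) • (e (k + p + j•h + n•h - i•h - m•h) * e (s + q + i•h + m•h - j•h - n•h)) := by
    intro i j m n
    rw [show (((p + j•h + n•h : Γ):ℂ) - ((k - i•h - m•h : Γ):ℂ)) = ((p:ℂ)-(k:ℂ)+2*(r:ℂ)*(h:ℂ))
        + (((i:ℂ)+(j:ℂ)+(m:ℂ)+(n:ℂ)-2*(r:ℂ))*(h:ℂ)) from by push_cast; ring]
    rw [mul_add, add_smul]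
  rw [S4_congr (fun i j m n _ _ _ _ => hsplitX i j m n), S4_add, hsym, add_zero]
  have hpull : S4 (r+1) (fun i j m n => (C4 r i j m n * (((p:ℂ)-(k:ℂ)+2*(r:ℂ)*(h:ℂ)))) • (e (k + p + j•h + n•h - i•h - m•h) * e (s + q + i•h + m•h - j•h - n•h)))
      = ((p:ℂ)-(k:ℂ)+2*(r:ℂ)*(h:ℂ)) • S4 (r+1) (fun i j m n => C4 r i j m n • (e (k + p + j•h + n•h - i•h - m•h) * e (s + q + i•h + m•h - j•h - n•h))) := by
    rw [S4_smul]
    refine S4_congr fun i j m n _ _ _ _ => ?_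
    rw [smul_smul]
    congr 1
    ring
  rw [hpull]
  have hfiber : S4 (r+1) (fun i j m n => C4 r i j m n • (e (k + p + j•h + n•h - i•h - m•h) * e (s + q + i•h + m•h - j•h - n•h)))
      = ∑ t ∈ range (4*r+1), ((-1:ℂ)^t * ((4*r).choose t : ℂ)) •
          (e (k + p + (2*r)•h - t•h) * e (s + q - (2*r)•h + t•h)) := by
    rw [S4_reflect24]
    have hcongr : ∀ i j m n : ℕ, i < r+1 → j < r+1 → m < r+1 → n < r+1 →
        C4 r i (r-j) m (r-n) •
          (e (k + p + (r-j)•h + (r-n)•h - i•h - m•h) * e (s + q + i•h + m•h - (r-j)•h - (r-n)•h))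
        = ((-1:ℂ)^(i+j+m+n) * (r.choose i : ℂ) * (r.choose j : ℂ) * (r.choose m : ℂ) * (r.choose n : ℂ)) • (e (k + p + (2*r)•h - (i+j+m+n)•h) * e (s + q - (2*r)•h + (i+j+m+n)•h)) := by
      intro i j m n hi hj hm hn
      have hj' : j ≤ r := by omega
      have hn' : n ≤ r := by omega
      rw [C4_reflect24 r i j m n hj' hn']
      rw [word2_eq e
        (show k + p + (r-j)•h + (r-n)•h - i•h - m•h = k + p + (2*r)•h - (i+j+m+n)•h from by
          rw [nsmul_sub' r j hj' h, nsmul_sub' r n hn' h,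
            show (2*r)•h = r•h + r•h from by rw [two_mul, add_smul],
            show (i+j+m+n)•h = i•h + j•h + m•h + n•h from by simp [add_smul]]
          abel)
        (show s + q + i•h + m•h - (r-j)•h - (r-n)•h = s + q - (2*r)•h + (i+j+m+n)•h from by
          rw [nsmul_sub' r j hj' h, nsmul_sub' r n hn' h,
            show (2*r)•h = r•h + r•h from by rw [two_mul, add_smul],
            show (i+j+m+n)•h = i•h + j•h + m•h + n•h from by simp [add_smul]]
          abel)]
      unfold C4
      rfl
    rw [S4_congr hcongr]
    exact vander4 r (fun t => e (k + p + (2*r)•h - t•h) * e (s + q - (2*r)•h + t•h))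
  rw [hfiber]
  rw [diffr]
  rw [smul_smul, Finset.smul_sum]


omit hcomm in
theorem hprod (r : ℕ) (h a b c d : Γ) :
    diffr Γ R e r h a b * diffr Γ R e r h c d
    = ∑ m ∈ range (r+1), ∑ n ∈ range (r+1),
        (((-1:ℂ)^m * (r.choose m : ℂ)) * ((-1:ℂ)^n * (r.choose n : ℂ))) •
          ((e (a - m•h) * e (b + m•h)) * (e (c - n•h) * e (d + n•h))) := by
  unfold diffr
  rw [Finset.sum_mul_sum]
  exact Finset.sum_congr rfl fun m _ => Finset.sum_congr rfl fun n _ => by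
    rw [smul_mul_smul_comm]

omit hcomm in
theorem step0 (r : ℕ) (h k s q p : Γ) :
    (∑ i ∈ Finset.range (r + 1), ∑ j ∈ Finset.range (r + 1),
      ((-1 : ℂ) ^ (i + j) * (r.choose i : ℂ) * (r.choose j : ℂ)) •
        ((diffr Γ R e r h (k - i • h) (s - j • h) * diffr Γ R e r h (q + i • h) (p + j • h)
            + diffr Γ R e r h (q + i • h) (p + j • h) * diffr Γ R e r h (k - i • h) (s - j • h))
          - (diffr Γ R e r h (k - i • h) (q - j • h) * diffr Γ R e r h (s + i • h) (p + j • h)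
            + diffr Γ R e r h (s + i • h) (p + j • h) * diffr Γ R e r h (k - i • h) (q - j • h))))
    = S4 (r+1) (fun i j m n => C4 r i j m n • ((e (k - i•h - m•h) * e (s - j•h + m•h)) * (e (q + i•h - n•h) * e (p + j•h + n•h))))
      + S4 (r+1) (fun i j m n => C4 r i j m n • ((e (q + i•h - m•h) * e (p + j•h + m•h)) * (e (k - i•h - n•h) * e (s - j•h + n•h))))
      - S4 (r+1) (fun i j m n => C4 r i j m n • ((e (k - i•h - m•h) * e (q - j•h + m•h)) * (e (s + i•h - n•h) * e (p + j•h + n•h))))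
      - S4 (r+1) (fun i j m n => C4 r i j m n • ((e (s + i•h - m•h) * e (p + j•h + m•h)) * (e (k - i•h - n•h) * e (q - j•h + n•h)))) := by
  have hsummand : ∀ i j : ℕ,
      ((-1 : ℂ) ^ (i + j) * (r.choose i : ℂ) * (r.choose j : ℂ)) •
        ((diffr Γ R e r h (k - i • h) (s - j • h) * diffr Γ R e r h (q + i • h) (p + j • h)
            + diffr Γ R e r h (q + i • h) (p + j • h) * diffr Γ R e r h (k - i • h) (s - j • h))
          - (diffr Γ R e r h (k - i • h) (q - j • h) * diffr Γ R e r h (s + i • h) (p + j • h)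
            + diffr Γ R e r h (s + i • h) (p + j • h) * diffr Γ R e r h (k - i • h) (q - j • h)))
      = ((∑ m ∈ range (r+1), ∑ n ∈ range (r+1), C4 r i j m n • ((e (k - i•h - m•h) * e (s - j•h + m•h)) * (e (q + i•h - n•h) * e (p + j•h + n•h))))
          + ∑ m ∈ range (r+1), ∑ n ∈ range (r+1), C4 r i j m n • ((e (q + i•h - m•h) * e (p + j•h + m•h)) * (e (k - i•h - n•h) * e (s - j•h + n•h))))
        - ((∑ m ∈ range (r+1), ∑ n ∈ range (r+1), C4 r i j m n • ((e (k - i•h - m•h) * e (q - j•h + m•h)) * (e (s + i•h - n•h) * e (p + j•h + n•h))))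
          + ∑ m ∈ range (r+1), ∑ n ∈ range (r+1), C4 r i j m n • ((e (s + i•h - m•h) * e (p + j•h + m•h)) * (e (k - i•h - n•h) * e (q - j•h + n•h)))) := by
    intro i j
    rw [hprod r h (k - i•h) (s - j•h) (q + i•h) (p + j•h),
        hprod r h (q + i•h) (p + j•h) (k - i•h) (s - j•h),
        hprod r h (k - i•h) (q - j•h) (s + i•h) (p + j•h),
        hprod r h (s + i•h) (p + j•h) (k - i•h) (q - j•h)]
    rw [smul_sub, smul_add, smul_add]
    refine congrArg₂ (· - ·) (congrArg₂ (· + ·) ?_ ?_) (congrArg₂ (· + ·) ?_ ?_) <;>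
    · rw [Finset.smul_sum]
      refine Finset.sum_congr rfl fun m _ => ?_
      rw [Finset.smul_sum]
      refine Finset.sum_congr rfl fun n _ => ?_
      rw [smul_smul]
      congr 1
      unfold C4
      ring
  rw [Finset.sum_congr rfl (fun i _ => Finset.sum_congr rfl (fun j _ => hsummand i j))]
  simp only [Finset.sum_sub_distrib, Finset.sum_add_distrib]
  unfold S4
  abel

end Main


/-- In `U(W_μ)` (equivalently, in any associative `ℂ`-algebra with elements
`e_k, k ∈ Γ_μ`, satisfying `e_k e_m − e_m e_k = (m−k) e_{k+m}`), for `r ≥ 2` and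
`k,s,p,q,h ∈ Γ_μ`:
`Σ_{i,j=0}^{r} (−1)^{i+j} C(r,i)C(r,j) ({Ω^{(r,h)}_{k−ih,s−jh}, Ω^{(r,h)}_{q+ih,p+jh}}
 − {Ω^{(r,h)}_{k−ih,q−jh}, Ω^{(r,h)}_{s+ih,p+jh}})
 = (q−s)(p−k+2rh) Ω^{(4r,h)}_{k+p+2rh, s+q−2rh}`,
where `{X,Y} = XY + YX`. -/
theorem stmt17 (Γ : AddSubgroup ℂ) (R : Type) [Ring R] [Algebra ℂ R] (e : Γ → R)
    (hcomm : ∀ k m : Γ, e k * e m - e m * e k = ((m : ℂ) - (k : ℂ)) • e (k + m))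
    (r : ℕ) (hr : 2 ≤ r) (k s p q h : Γ) :
    ∑ i ∈ Finset.range (r + 1), ∑ j ∈ Finset.range (r + 1),
      ((-1 : ℂ) ^ (i + j) * (r.choose i : ℂ) * (r.choose j : ℂ)) •
        ((diffr Γ R e r h (k - i • h) (s - j • h) * diffr Γ R e r h (q + i • h) (p + j • h)
            + diffr Γ R e r h (q + i • h) (p + j • h) * diffr Γ R e r h (k - i • h) (s - j • h))
          - (diffr Γ R e r h (k - i • h) (q - j • h) * diffr Γ R e r h (s + i • h) (p + j • h)
            + diffr Γ R e r h (s + i • h) (p + j • h) * diffr Γ R e r h (k - i • h) (q - j • h)))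
      = (((q : ℂ) - (s : ℂ)) * ((p : ℂ) - (k : ℂ) + 2 * (r : ℂ) * (h : ℂ))) •
          diffr Γ R e (4 * r) h (k + p + (2 * r) • h) (s + q - (2 * r) • h) := by
  rw [step0 (e := e) r h k s q p]
  rw [show ∀ A B C D : R, A + B - C - D = (A - C) + (B - D) from fun A B C D => by abel]
  rw [step1 hcomm r h k s q p, step2 hcomm hr h k s q p]
  exact step3 hcomm hr h k s q p
end
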